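/- arXiv:2205.11196 — 10 statements merged into one kernel-verified Lean document; each statement's English description precedes it below -/
import Mathlib

section
/- Let A be an m×n real matrix, b ∈ ℝ^m, c ∈ ℝ^n. If there exist x̄ ≥ 0 with Ax̄ ≤ b and ȳ ≥ 0 with ȳᵀA ≥ cᵀ, then there exist x ≥ 0 with Ax ≤ b and y ≥ 0 with yᵀA ≥ cᵀ such that cᵀx = yᵀb (and these x, y are optimal solutions of the primal maximization LP and dual minimization LP, respectively). -/
open Matrix

section LPAux
open Finset

lemma coneClosed {E : Type*} [NormedAddCommGroup E] [NormedSpace ℝ E] [FiniteDimensional ℝ E] :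
    ∀ (l : ℕ) (v : Fin l → E),
      IsClosed {d : E | ∃ t : Fin l → ℝ, 0 ≤ t ∧ ∑ i, t i • v i = d} := by
  intro l
  induction l using Nat.strong_induction_on with
  | _ l IH =>
  intro v
  by_cases hind : LinearIndependent ℝ v
  · -- independent case: closed embedding image
    set L : (Fin l → ℝ) →ₗ[ℝ] E :=
      { toFun := fun t => ∑ i, t i • v i
        map_add' := by
          intro a b
          simp [add_smul, Finset.sum_add_distrib]
        map_smul' := by
          intro r a
          simp [mul_smul, Finset.smul_sum] } with hL
    have hker : LinearMap.ker L = ⊥ := by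
      rw [LinearMap.ker_eq_bot']
      intro t ht
      funext i
      exact Fintype.linearIndependent_iff.mp hind t ht i
    have hemb := LinearMap.isClosedEmbedding_of_injective (f := L) hker
    have hclosed : IsClosed {t : Fin l → ℝ | 0 ≤ t} := by
      have : {t : Fin l → ℝ | 0 ≤ t} = ⋂ i, (fun t : Fin l → ℝ => t i) ⁻¹' Set.Ici 0 := by
        ext t; simp [Pi.le_def, Set.mem_iInter]
      rw [this]
      exact isClosed_iInter fun i => (isClosed_Ici).preimage (continuous_apply i)
    have himg : {d : E | ∃ t : Fin l → ℝ, 0 ≤ t ∧ ∑ i, t i • v i = d}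
        = L '' {t : Fin l → ℝ | 0 ≤ t} := by
      ext d
      simp only [Set.mem_setOf_eq, Set.mem_image, hL]
      constructor
      · rintro ⟨t, ht, hs⟩; exact ⟨t, ht, hs⟩
      · rintro ⟨t, ht, hs⟩; exact ⟨t, ht, hs⟩
    rw [himg]
    exact hemb.isClosedMap _ hclosed
  · -- dependent case
    match l with
    | 0 => exact absurd (linearIndependent_empty_type) hind
    | Nat.succ l' =>
    obtain ⟨g, hg, i₁, hgi₁⟩ := Fintype.not_linearIndependent_iff.mp hind
    -- get a relation with a positive coefficient
    obtain ⟨cc, hcc, i₂, hci₂⟩ :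
        ∃ cc : Fin (l' + 1) → ℝ, ∑ i, cc i • v i = 0 ∧ ∃ i, 0 < cc i := by
      rcases lt_or_gt_of_ne hgi₁ with hlt | hgt
      · exact ⟨-g, by simpa using hg, i₁, by simpa using hlt⟩
      · exact ⟨g, hg, i₁, hgt⟩
    have hunion : {d : E | ∃ t : Fin (l' + 1) → ℝ, 0 ≤ t ∧ ∑ i, t i • v i = d}
        = ⋃ i : Fin (l' + 1),
            {d : E | ∃ s : Fin l' → ℝ, 0 ≤ s ∧ ∑ j, s j • v (i.succAbove j) = d} := by
      ext d
      simp only [Set.mem_setOf_eq, Set.mem_iUnion]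
      constructor
      · rintro ⟨t, ht, hsum⟩
        have hPne : (univ.filter (fun i => 0 < cc i)).Nonempty :=
          ⟨i₂, by simp [hci₂]⟩
        obtain ⟨i₀, hi₀mem, hmin⟩ :=
          Finset.exists_min_image _ (fun i => t i / cc i) hPne
        have hci₀ : 0 < cc i₀ := (Finset.mem_filter.mp hi₀mem).2
        set r := t i₀ / cc i₀ with hr
        have hr0 : 0 ≤ r := div_nonneg (ht i₀) hci₀.le
        set t' : Fin (l' + 1) → ℝ := fun j => t j - r * cc j with ht'
        have ht'0 : ∀ j, 0 ≤ t' j := by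
          intro j
          by_cases hcj : 0 < cc j
          · have := hmin j (Finset.mem_filter.mpr ⟨Finset.mem_univ j, hcj⟩)
            have : r * cc j ≤ t j := by
              rw [hr]
              calc t i₀ / cc i₀ * cc j ≤ t j / cc j * cc j := by
                    exact mul_le_mul_of_nonneg_right this hcj.le
                _ = t j := div_mul_cancel₀ _ hcj.ne'
            simpa [ht'] using sub_nonneg.mpr this
          · push_neg at hcj
            have h1 : r * cc j ≤ 0 := mul_nonpos_of_nonneg_of_nonpos hr0 hcj
            have h2 : (0:ℝ) ≤ t j := ht j
            simp only [ht']
            linarith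
        have hti₀ : t' i₀ = 0 := by
          simp [ht', hr, div_mul_cancel₀ _ hci₀.ne']
        have hsum' : ∑ j, t' j • v j = d := by
          have : ∑ j, t' j • v j = ∑ j, t j • v j - r • ∑ j, cc j • v j := by
            rw [Finset.smul_sum]
            rw [← Finset.sum_sub_distrib]
            congr 1
            funext j
            rw [sub_smul, smul_smul]
          rw [this, hcc, smul_zero, sub_zero, hsum]
        refine ⟨i₀, fun j => t' (i₀.succAbove j), fun j => ht'0 _, ?_⟩
        rw [← hsum', Fin.sum_univ_succAbove (fun j => t' j • v j) i₀, hti₀, zero_smul, zero_add]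
      · rintro ⟨i, s, hs, hsum⟩
        refine ⟨i.insertNth (α := fun _ => ℝ) 0 s, ?_, ?_⟩
        · intro j
          refine i.succAboveCases ?_ ?_ j
          · simp
          · intro k; simpa using hs k
        · rw [Fin.sum_univ_succAbove (fun j => (i.insertNth (α := fun _ => ℝ) 0 s) j • v j) i]
          simp [hsum]
    rw [hunion]
    exact isClosed_iUnion_of_finite fun i => IH l' (Nat.lt_succ_self l') _

lemma farkas {E : Type*} [NormedAddCommGroup E] [NormedSpace ℝ E] [FiniteDimensional ℝ E]
    {ι : Type*} [Fintype ι] [DecidableEq ι] (v : ι → E) (d : E) :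
    (∃ t : ι → ℝ, 0 ≤ t ∧ ∑ i, t i • v i = d) ∨
      ∃ f : E →L[ℝ] ℝ, (∀ i, f (v i) ≤ 0) ∧ 0 < f d := by
  by_cases h : ∃ t : ι → ℝ, 0 ≤ t ∧ ∑ i, t i • v i = d
  · exact Or.inl h
  · right
    set C : Set E := {e : E | ∃ t : ι → ℝ, 0 ≤ t ∧ ∑ i, t i • v i = e} with hC
    have hCclosed : IsClosed C := by
      have e := Fintype.equivFin ι
      have : C = {e' : E | ∃ t : Fin (Fintype.card ι) → ℝ, 0 ≤ t ∧
          ∑ i, t i • v (e.symm i) = e'} := by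
        ext p
        constructor
        · rintro ⟨t, ht, hs⟩
          refine ⟨fun i => t (e.symm i), fun i => ht _, ?_⟩
          rw [← hs]
          exact Fintype.sum_equiv e.symm _ _ fun i => rfl
        · rintro ⟨t, ht, hs⟩
          refine ⟨fun i => t (e i), fun i => ht _, ?_⟩
          rw [← hs]
          exact Fintype.sum_equiv e _ _ fun i => by simp
      rw [this]
      exact coneClosed _ _
    have hCconv : Convex ℝ C := by
      rintro p ⟨tp, htp, hsp⟩ q ⟨tq, htq, hsq⟩ a bb ha hb hab
      refine ⟨fun i => a * tp i + bb * tq i,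
        fun i => add_nonneg (mul_nonneg ha (htp i)) (mul_nonneg hb (htq i)), ?_⟩
      simp only [add_smul, mul_smul, Finset.sum_add_distrib, ← Finset.smul_sum]
      rw [hsp, hsq]
    obtain ⟨f, u, hfu, hud⟩ := geometric_hahn_banach_closed_point hCconv hCclosed h
    have h0C : (0 : E) ∈ C := ⟨0, le_refl _, by simp⟩
    have hu0 : 0 < u := by simpa using hfu 0 h0C
    have hfneg : ∀ p ∈ C, f p ≤ 0 := by
      intro p hp
      by_contra hfp
      push_neg at hfp
      obtain ⟨tp, htp, hsp⟩ := hp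
      have hmem : (u / f p) • p ∈ C := by
        refine ⟨fun i => (u / f p) * tp i,
          fun i => mul_nonneg (div_nonneg hu0.le hfp.le) (htp i), ?_⟩
        simp only [mul_smul, ← Finset.smul_sum]
        rw [hsp]
      have := hfu _ hmem
      rw [_root_.map_smul] at this
      simp only [smul_eq_mul, div_mul_cancel₀ _ (ne_of_gt hfp)] at this
      exact lt_irrefl u this
    refine ⟨f, fun i => hfneg (v i) ?_, hu0.trans hud⟩
    refine ⟨fun j => if j = i then 1 else 0, fun j => by positivity, ?_⟩
    simp [ite_smul]

lemma weak_duality {m n : ℕ} (A : Matrix (Fin m) (Fin n) ℝ) (b : Fin m → ℝ) (c : Fin n → ℝ)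
    {x : Fin n → ℝ} {y : Fin m → ℝ} (hx0 : 0 ≤ x) (hxA : A.mulVec x ≤ b)
    (hy0 : 0 ≤ y) (hyc : c ≤ A.vecMul y) : c ⬝ᵥ x ≤ y ⬝ᵥ b :=
  calc c ⬝ᵥ x ≤ (A.vecMul y) ⬝ᵥ x :=
        Finset.sum_le_sum fun i _ => mul_le_mul_of_nonneg_right (hyc i) (hx0 i)
    _ = y ⬝ᵥ A.mulVec x := (Matrix.dotProduct_mulVec y A x).symm
    _ ≤ y ⬝ᵥ b := Finset.sum_le_sum fun i _ => mul_le_mul_of_nonneg_left (hxA i) (hy0 i)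

-- decomposition of a continuous linear functional on the product space
lemma clm_decomp {m n : ℕ} (f : ((Fin m → ℝ) × (Fin n → ℝ) × ℝ) →L[ℝ] ℝ)
    (p : Fin m → ℝ) (q : Fin n → ℝ) (r : ℝ) :
    f (p, q, r) = ∑ i, p i * f (Pi.single i 1, 0, 0)
      + ∑ j, q j * f (0, Pi.single j 1, 0) + r * f (0, 0, 1) := by
  have hrep : (p, q, r) = (∑ i, p i • ((Pi.single i 1 : Fin m → ℝ), (0 : Fin n → ℝ), (0:ℝ)))
      + (∑ j, q j • ((0 : Fin m → ℝ), (Pi.single j 1 : Fin n → ℝ), (0:ℝ)))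
      + r • ((0 : Fin m → ℝ), (0 : Fin n → ℝ), (1:ℝ)) := by
    have hsing : ∀ {k : ℕ} (p : Fin k → ℝ), ∑ x, p x • (Pi.single x 1 : Fin k → ℝ) = p := by
      intro k p
      funext j
      simp [Finset.sum_apply, Pi.single_apply, mul_ite, Finset.sum_ite_eq]
    refine Prod.ext ?_ (Prod.ext ?_ ?_) <;>
      simp [Prod.fst_sum, Prod.snd_sum, hsing]
  rw [hrep]
  simp only [map_add, map_sum, _root_.map_smul, smul_eq_mul]

end LPAux

theorem lp_strong_duality (m n : ℕ) (A : Matrix (Fin m) (Fin n) ℝ)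
    (b : Fin m → ℝ) (c : Fin n → ℝ)
    (hP : ∃ x : Fin n → ℝ, 0 ≤ x ∧ A.mulVec x ≤ b)
    (hD : ∃ y : Fin m → ℝ, 0 ≤ y ∧ c ≤ A.vecMul y) :
    ∃ (x : Fin n → ℝ) (y : Fin m → ℝ),
      0 ≤ x ∧ A.mulVec x ≤ b ∧ 0 ≤ y ∧ c ≤ A.vecMul y ∧ c ⬝ᵥ x = y ⬝ᵥ b := by
  classical
  set v : (Fin n ⊕ (Fin m ⊕ (Fin m ⊕ (Fin n ⊕ Unit)))) → ((Fin m → ℝ) × (Fin n → ℝ) × ℝ) :=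
    Sum.elim (fun j => ((fun i => A i j), (0 : Fin n → ℝ), -(c j)))
      (Sum.elim (fun i => ((0 : Fin m → ℝ), (fun j => -(A i j)), b i))
        (Sum.elim (fun i => ((Pi.single i 1 : Fin m → ℝ), (0 : Fin n → ℝ), (0:ℝ)))
          (Sum.elim (fun j => ((0 : Fin m → ℝ), (Pi.single j 1 : Fin n → ℝ), (0:ℝ)))
            (fun _ => ((0 : Fin m → ℝ), (0 : Fin n → ℝ), (1:ℝ)))))) with hv
  set d : ((Fin m → ℝ) × (Fin n → ℝ) × ℝ) := (b, -c, 0) with hd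
  rcases farkas v d with ⟨t, ht, hsum⟩ | ⟨f, hfv, hfd⟩
  · -- the combined system is feasible
    set x : Fin n → ℝ := fun j => t (Sum.inl j) with hx
    set y : Fin m → ℝ := fun i => t (Sum.inr (Sum.inl i)) with hy
    set sl : Fin m → ℝ := fun i => t (Sum.inr (Sum.inr (Sum.inl i))) with hsl
    set u : Fin n → ℝ := fun j => t (Sum.inr (Sum.inr (Sum.inr (Sum.inl j)))) with hu
    set r : ℝ := t (Sum.inr (Sum.inr (Sum.inr (Sum.inr ())))) with hrr
    have key : ∀ (φ : ((Fin m → ℝ) × (Fin n → ℝ) × ℝ) →ₗ[ℝ] ℝ), φ d = ∑ k, t k * φ (v k) := by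
      intro φ
      rw [← hsum, map_sum]
      simp [_root_.map_smul]
    have h1 : ∀ i, A.mulVec x i + sl i = b i := by
      intro i
      have h2 := key ((LinearMap.proj i).comp (LinearMap.fst ℝ (Fin m → ℝ) ((Fin n → ℝ) × ℝ)))
      simp [hv, hd, Fintype.sum_sum_type, Pi.single_apply, mul_ite,
        Finset.sum_ite_eq'] at h2
      simp only [Matrix.mulVec, dotProduct, hx, hsl]
      rw [h2]
      simp [mul_comm]
    have h2 : ∀ j, c j ≤ A.vecMul y j := by
      intro j
      have h2 := key ((LinearMap.proj j).comp ((LinearMap.fst ℝ (Fin n → ℝ) ℝ).comp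
        (LinearMap.snd ℝ (Fin m → ℝ) ((Fin n → ℝ) × ℝ))))
      simp [hv, hd, Fintype.sum_sum_type, Pi.single_apply, mul_ite,
        Finset.sum_ite_eq'] at h2
      have hu0 : 0 ≤ u j := ht _
      simp only [Matrix.vecMul, dotProduct, hy]
      simp only [hu] at hu0
      linarith
    have h3 : y ⬝ᵥ b + r = c ⬝ᵥ x := by
      have h2 := key ((LinearMap.snd ℝ (Fin n → ℝ) ℝ).comp
        (LinearMap.snd ℝ (Fin m → ℝ) ((Fin n → ℝ) × ℝ)))
      simp [hv, hd, Fintype.sum_sum_type] at h2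
      simp only [dotProduct, hx, hy, hrr]
      have : ∑ x_1 : Fin n, c x_1 * t (Sum.inl x_1) = ∑ x_1 : Fin n, t (Sum.inl x_1) * c x_1 :=
        Finset.sum_congr rfl fun _ _ => mul_comm _ _
      rw [this]
      have hpu : t (Sum.inr (Sum.inr (Sum.inr (Sum.inr ())))) =
        t (Sum.inr (Sum.inr (Sum.inr (Sum.inr PUnit.unit)))) := rfl
      linarith
    have hax : A.mulVec x ≤ b := by
      intro i
      have h0 : (0:ℝ) ≤ sl i := ht _
      have h := h1 i
      linarith
    refine ⟨x, y, fun j => ht _, hax, fun i => ht _, h2, ?_⟩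
    have hwd := weak_duality A b c (x := x) (y := y) (fun j => ht _) hax (fun i => ht _) h2
    have hr0 : (0:ℝ) ≤ r := ht _
    linarith
  · -- infeasible case: contradiction
    exfalso
    set Y : Fin m → ℝ := fun i => -(f (Pi.single i 1, 0, 0)) with hY
    set X : Fin n → ℝ := fun j => -(f (0, Pi.single j 1, 0)) with hX
    set lam : ℝ := -(f (0, 0, 1)) with hlam
    have hY0 : ∀ i, 0 ≤ Y i := fun i => by
      have := hfv (Sum.inr (Sum.inr (Sum.inl i)))
      simp only [hv, Sum.elim_inr, Sum.elim_inl] at this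
      simp only [hY]; linarith
    have hX0 : ∀ j, 0 ≤ X j := fun j => by
      have := hfv (Sum.inr (Sum.inr (Sum.inr (Sum.inl j))))
      simp only [hv, Sum.elim_inr, Sum.elim_inl] at this
      simp only [hX]; linarith
    have hlam0 : 0 ≤ lam := by
      have := hfv (Sum.inr (Sum.inr (Sum.inr (Sum.inr ()))))
      simp only [hv, Sum.elim_inr] at this
      simp only [hlam]; linarith
    have hdual : ∀ j, lam * c j ≤ ∑ i, Y i * A i j := by
      intro j
      have h := hfv (Sum.inl j)
      simp only [hv, Sum.elim_inl] at h
      rw [clm_decomp] at h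
      simp only [Pi.zero_apply, zero_mul, Finset.sum_const_zero, add_zero] at h
      have : ∑ i, A i j * f (Pi.single i 1, 0, 0) = -∑ i, Y i * A i j := by
        rw [← Finset.sum_neg_distrib]
        exact Finset.sum_congr rfl fun i _ => by simp only [hY]; ring
      rw [this] at h
      simp only [hlam] at h ⊢
      nlinarith [h]
    have hprim : ∀ i, ∑ j, A i j * X j ≤ lam * b i := by
      intro i
      have h := hfv (Sum.inr (Sum.inl i))
      simp only [hv, Sum.elim_inr, Sum.elim_inl] at h
      rw [clm_decomp] at h
      simp only [Pi.zero_apply, zero_mul, Finset.sum_const_zero, zero_add] at h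
      have : ∑ j, -A i j * f (0, Pi.single j 1, 0) = ∑ j, A i j * X j := by
        exact Finset.sum_congr rfl fun j _ => by simp only [hX]; ring
      rw [this] at h
      simp only [hlam] at h ⊢
      nlinarith [h]
    have hgap : ∑ i, b i * Y i < ∑ j, c j * X j := by
      have h := hfd
      rw [hd, clm_decomp] at h
      simp only [mul_zero, zero_mul, add_zero] at h
      have e1 : ∑ i, b i * f (Pi.single i 1, 0, 0) = -∑ i, b i * Y i := by
        rw [← Finset.sum_neg_distrib]
        exact Finset.sum_congr rfl fun i _ => by simp only [hY]; ring
      have e2 : ∑ j, (-c) j * f (0, Pi.single j 1, 0) = ∑ j, c j * X j := by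
        exact Finset.sum_congr rfl fun j _ => by simp only [hX, Pi.neg_apply]; ring
      rw [e1, e2] at h
      linarith
    rcases eq_or_lt_of_le hlam0 with hlz | hlp
    · -- lam = 0
      obtain ⟨x₀, hx₀0, hx₀⟩ := hP
      obtain ⟨y₀, hy₀0, hy₀⟩ := hD
      have hYb : 0 ≤ ∑ i, b i * Y i := by
        have s1 : ∑ i, (A.mulVec x₀ i) * Y i ≤ ∑ i, b i * Y i :=
          Finset.sum_le_sum fun i _ => mul_le_mul_of_nonneg_right (hx₀ i) (hY0 i)
        have s2 : 0 ≤ ∑ i, (A.mulVec x₀ i) * Y i := by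
          have : ∑ i, (A.mulVec x₀ i) * Y i = ∑ j, (∑ i, Y i * A i j) * x₀ j := by
            simp only [Matrix.mulVec, dotProduct, Finset.sum_mul, Finset.mul_sum]
            rw [Finset.sum_comm]
            exact Finset.sum_congr rfl fun j _ => Finset.sum_congr rfl fun i _ => by ring
          rw [this]
          refine Finset.sum_nonneg fun j _ => mul_nonneg ?_ (hx₀0 j)
          have := hdual j
          rw [← hlz] at this
          simpa using this
        linarith
      have hcX : ∑ j, c j * X j ≤ 0 := by
        have s1 : ∑ j, c j * X j ≤ ∑ j, (A.vecMul y₀ j) * X j :=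
          Finset.sum_le_sum fun j _ => mul_le_mul_of_nonneg_right (hy₀ j) (hX0 j)
        have s2 : ∑ j, (A.vecMul y₀ j) * X j ≤ 0 := by
          have : ∑ j, (A.vecMul y₀ j) * X j = ∑ i, (∑ j, A i j * X j) * y₀ i := by
            simp only [Matrix.vecMul, dotProduct, Finset.sum_mul, Finset.mul_sum]
            rw [Finset.sum_comm]
            exact Finset.sum_congr rfl fun i _ => Finset.sum_congr rfl fun j _ => by ring
          rw [this]
          refine Finset.sum_nonpos fun i _ => mul_nonpos_of_nonpos_of_nonneg ?_ (hy₀0 i)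
          have := hprim i
          rw [← hlz] at this
          simpa using this
        linarith
      linarith
    · -- lam > 0
      have hfeasx : A.mulVec (lam⁻¹ • X) ≤ b := by
        intro i
        have : A.mulVec (lam⁻¹ • X) i = lam⁻¹ * ∑ j, A i j * X j := by
          simp only [Matrix.mulVec, dotProduct, Pi.smul_apply, smul_eq_mul,
            Finset.mul_sum]
          exact Finset.sum_congr rfl fun j _ => by ring
        rw [this]
        calc lam⁻¹ * ∑ j, A i j * X j ≤ lam⁻¹ * (lam * b i) :=
              mul_le_mul_of_nonneg_left (hprim i) (inv_nonneg.mpr hlam0)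
          _ = b i := by field_simp
      have hfeasy : c ≤ A.vecMul (lam⁻¹ • Y) := by
        intro j
        have : A.vecMul (lam⁻¹ • Y) j = lam⁻¹ * ∑ i, Y i * A i j := by
          simp only [Matrix.vecMul, dotProduct, Pi.smul_apply, smul_eq_mul,
            Finset.mul_sum]
          exact Finset.sum_congr rfl fun i _ => by ring
        rw [this]
        calc c j = lam⁻¹ * (lam * c j) := by field_simp
          _ ≤ lam⁻¹ * ∑ i, Y i * A i j :=
              mul_le_mul_of_nonneg_left (hdual j) (inv_nonneg.mpr hlam0)
      have hwd := weak_duality A b c (x := lam⁻¹ • X) (y := lam⁻¹ • Y)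
        (fun j => mul_nonneg (inv_nonneg.mpr hlam0) (hX0 j)) hfeasx
        (fun i => mul_nonneg (inv_nonneg.mpr hlam0) (hY0 i)) hfeasy
      have hc : c ⬝ᵥ (lam⁻¹ • X) = lam⁻¹ * ∑ j, c j * X j := by
        simp only [dotProduct, Pi.smul_apply, smul_eq_mul, Finset.mul_sum]
        exact Finset.sum_congr rfl fun j _ => by ring
      have hb : (lam⁻¹ • Y) ⬝ᵥ b = lam⁻¹ * ∑ i, b i * Y i := by
        simp only [dotProduct, Pi.smul_apply, smul_eq_mul, Finset.mul_sum]
        exact Finset.sum_congr rfl fun i _ => by ring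
      rw [hc, hb] at hwd
      have := mul_lt_mul_of_pos_left hgap (inv_pos.mpr hlp)
      linarith
end

section
/- Let A be an m×n real matrix. There is no x ∈ ℝ^n with Ax ≤ 0, x ≥ 0, and x ≠ 0 if and only if there exists y ∈ ℝ^m with y ≥ 0 and yᵀA > 0ᵀ (every component strictly positive). -/
/-!
If no nonzero `x ≥ 0` has `A x ≤ 0`, then the compact convex set `-A(Δ)`, `Δ` the standard
simplex, misses the closed cone of nonnegative vectors. Separating them gives a functional
`z ↦ y ⬝ᵥ z` that is nonnegative on the cone, so `y ≥ 0`, and negative on `-A(Δ)`, so that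
`(yᵀA)_j > 0` at each vertex `e_j` of `Δ`. Conversely, such a `y` makes `yᵀAx` both `≤ 0` and
`> 0` for any nonzero `x ≥ 0` with `A x ≤ 0`.
-/

open Matrix

theorem Matrix.exists_dotProduct_eq {R ι : Type*} [CommSemiring R] [Fintype ι] [DecidableEq ι]
    (f : Module.Dual R (ι → R)) : ∃ y : ι → R, ∀ z, f z = y ⬝ᵥ z :=
  ⟨(dotProductEquiv R ι).symm f, fun z => by
    rw [← dotProductEquiv_apply_apply, LinearEquiv.apply_symm_apply]⟩

theorem Matrix.dotProduct_pos_of_forall_pos_of_pos {R ι : Type*} [Semiring R] [PartialOrder R]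
    [IsStrictOrderedRing R] [Fintype ι] {v w : ι → R} (hv : ∀ i, 0 < v i) (hw : 0 < w) :
    0 < v ⬝ᵥ w := by
  obtain ⟨hw_nonneg, j, hj⟩ := Pi.lt_def.1 hw
  exact Finset.sum_pos' (fun i _ => mul_nonneg (hv i).le (hw_nonneg i))
    ⟨j, Finset.mem_univ j, mul_pos (hv j) hj⟩

theorem ne_zero_of_mem_stdSimplex {𝕜 ι : Type*} [Semiring 𝕜] [PartialOrder 𝕜] [Nontrivial 𝕜]
    [Fintype ι] {x : ι → 𝕜} (hx : x ∈ stdSimplex 𝕜 ι) : x ≠ 0 := by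
  rintro rfl
  simpa using hx.2

theorem Matrix.exists_nonneg_vecMul_pos_of_forall_mem_stdSimplex {ι κ : Type*}
    [Fintype ι] [Fintype κ] [DecidableEq ι] [DecidableEq κ] (A : Matrix ι κ ℝ)
    (h : ∀ x ∈ stdSimplex ℝ κ, ¬ A *ᵥ x ≤ 0) : ∃ y, 0 ≤ y ∧ ∀ j, 0 < (y ᵥ* A) j := by
  have hdisj : Disjoint ((-A).mulVec '' stdSimplex ℝ κ) (ProperCone.positive ℝ (ι → ℝ)) := by
    refine Set.disjoint_left.2 ?_
    rintro _ ⟨x, hx, rfl⟩ hpos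
    exact h x hx (by simpa [neg_mulVec] using hpos)
  obtain ⟨f, hf_nonneg, hf_neg⟩ := (ProperCone.positive ℝ (ι → ℝ)).hyperplane_separation
    ((convex_stdSimplex ℝ κ).linear_image (-A).mulVecLin)
    ((isCompact_stdSimplex ℝ κ).image (-A).mulVecLin.continuous_of_finiteDimensional) hdisj
  obtain ⟨y, hy⟩ : ∃ y : ι → ℝ, ∀ z, f z = y ⬝ᵥ z := exists_dotProduct_eq f.toLinearMap
  refine ⟨y, fun i => ?_, fun j => ?_⟩
  · simpa [hy, dotProduct_single_one] using hf_nonneg (Pi.single i 1) (by simp [Pi.single_nonneg])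
  · have := hf_neg ((-A) *ᵥ Pi.single j 1) ⟨_, single_mem_stdSimplex ℝ j, rfl⟩
    rwa [hy, neg_mulVec, dotProduct_neg, dotProduct_mulVec, dotProduct_single_one,
      neg_neg_iff_pos] at this

theorem ville (m n : ℕ) (A : Matrix (Fin m) (Fin n) ℝ) :
    (¬ ∃ x : Fin n → ℝ, A.mulVec x ≤ 0 ∧ 0 ≤ x ∧ x ≠ 0) ↔
    (∃ y : Fin m → ℝ, 0 ≤ y ∧ ∀ j, 0 < A.vecMul y j) := by
  constructor
  · exact fun h => A.exists_nonneg_vecMul_pos_of_forall_mem_stdSimplex fun x hx hAx =>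
      h ⟨x, hAx, hx.1, ne_zero_of_mem_stdSimplex hx⟩
  · rintro ⟨y, hy, hyA⟩ ⟨x, hAx, hx, hx0⟩
    have hpos : 0 < y ⬝ᵥ A *ᵥ x := by
      rw [dotProduct_mulVec]
      exact dotProduct_pos_of_forall_pos_of_pos hyA (lt_of_le_of_ne hx (Ne.symm hx0))
    have hnonpos : y ⬝ᵥ A *ᵥ x ≤ 0 := by
      simpa using dotProduct_nonneg_of_nonneg hy (neg_nonneg.2 hAx)
    exact hpos.not_ge hnonpos
end

section
/- Let A be an m×n real matrix. There is no y ∈ ℝ^m with yᵀA ≥ 0ᵀ and yᵀA ≠ 0ᵀ if and only if there exists x ∈ ℝ^n with Ax = 0 and x > 0 (all components strictly positive). -/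
/-!
If the row space of `A` meets the nonnegative orthant only in `0`, it is disjoint from the
standard simplex. Separating the compact simplex from this closed subspace (Farkas) gives a
functional that vanishes on the row space and is negative on the simplex; minus its coefficient
vector is strictly positive and orthogonal to every row, i.e. lies in the kernel of `A`.
Conversely, a strictly positive `x` with `A x = 0` would have positive dot product with any
nonzero `yᵀA ≥ 0`, whereas `yᵀA x = 0`.
-/

open scoped Matrix

theorem Submodule.exists_strongDual_eq_zero_and_neg_of_disjoint {E : Type*}
    [TopologicalSpace E] [AddCommGroup E] [IsTopologicalAddGroup E] [Module ℝ E]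
    [ContinuousSMul ℝ E] [LocallyConvexSpace ℝ E] {K : Set E} (S : Submodule ℝ E)
    (hS : IsClosed (S : Set E)) (hKconv : Convex ℝ K) (hKcomp : IsCompact K)
    (hKS : Disjoint K S) :
    ∃ f : StrongDual ℝ E, (∀ z ∈ S, f z = 0) ∧ ∀ x ∈ K, f x < 0 := by
  obtain ⟨f, hfS, hfK⟩ :=
    ProperCone.hyperplane_separation ⟨S.restrictScalars NNReal, hS⟩ hKconv hKcomp hKS
  refine ⟨f, fun z hz => le_antisymm ?_ (hfS z hz), hfK⟩
  simpa using hfS (-z) (S.neg_mem hz)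

theorem dotProduct_pos_of_nonneg_of_ne_zero {ι : Type*} [Fintype ι] {v w : ι → ℝ}
    (hv : 0 ≤ v) (hv0 : v ≠ 0) (hw : ∀ i, 0 < w i) : 0 < v ⬝ᵥ w := by
  obtain ⟨i, hi⟩ := Function.ne_iff.mp hv0
  exact Finset.sum_pos' (fun j _ => mul_nonneg (hv j) (hw j).le)
    ⟨i, Finset.mem_univ i, mul_pos ((hv i).lt_of_ne' hi) (hw i)⟩

theorem Submodule.forall_nonneg_eq_zero_iff_exists_pos_orthogonal {ι : Type*} [Fintype ι]
    (S : Submodule ℝ (ι → ℝ)) :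
    (∀ z ∈ S, 0 ≤ z → z = 0) ↔ ∃ x : ι → ℝ, (∀ i, 0 < x i) ∧ ∀ z ∈ S, z ⬝ᵥ x = 0 := by
  classical
  constructor
  · intro hS
    have hdisj : Disjoint (stdSimplex ℝ ι) S := by
      refine Set.disjoint_left.mpr fun z hz hzS => ?_
      have : ∑ i, z i = 0 := by simp [hS z hzS hz.1]
      exact one_ne_zero (hz.2.symm.trans this)
    obtain ⟨f, hfS, hfK⟩ := S.exists_strongDual_eq_zero_and_neg_of_disjoint
      S.closed_of_finiteDimensional (convex_stdSimplex ℝ ι) (isCompact_stdSimplex ℝ ι) hdisj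
    have hf : ∀ z, f z = (dotProductEquiv ℝ ι).symm f.toLinearMap ⬝ᵥ z := fun z =>
      (LinearMap.congr_fun ((dotProductEquiv ℝ ι).apply_symm_apply f.toLinearMap) z).symm
    refine ⟨-(dotProductEquiv ℝ ι).symm f.toLinearMap, fun i => ?_, fun z hz => ?_⟩
    · simpa using hfK _ (single_mem_stdSimplex ℝ i)
    · rw [dotProduct_neg, dotProduct_comm, ← hf, hfS z hz, neg_zero]
  · rintro ⟨x, hx, hxS⟩ z hz hz0
    by_contra hne
    exact (dotProduct_pos_of_nonneg_of_ne_zero hz0 hne hx).ne' (hxS z hz)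

theorem stiemke (m n : ℕ) (A : Matrix (Fin m) (Fin n) ℝ) :
    (¬ ∃ y : Fin m → ℝ, 0 ≤ A.vecMul y ∧ A.vecMul y ≠ 0) ↔
    (∃ x : Fin n → ℝ, A.mulVec x = 0 ∧ ∀ j, 0 < x j) := by
  have hrowSpace :=
    (LinearMap.range A.vecMulLinear).forall_nonneg_eq_zero_iff_exists_pos_orthogonal
  simp only [LinearMap.mem_range, Matrix.vecMulLinear_apply, forall_exists_index,
    forall_apply_eq_imp_iff, ← Matrix.dotProduct_mulVec] at hrowSpace
  simp_rw [dotProduct_comm _ (A *ᵥ _), dotProduct_eq_zero_iff] at hrowSpace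
  simp only [not_exists, not_and_not_right]
  exact hrowSpace.trans (exists_congr fun _ => and_comm)
end

section
/- Let A be an m×n real matrix and fix a column index j ∈ {1,…,n}. There exist y ∈ ℝ^m and x ∈ ℝ^n such that yᵀA ≥ 0ᵀ, x ≥ 0, Ax = 0, and x_j + (yᵀA)_j > 0. -/
open Finset

/-- Tucker's lemma for distinguished column `0`, by induction on the number of columns. -/
lemma tucker_aux : ∀ (n m : ℕ) (A : Matrix (Fin m) (Fin (n + 1)) ℝ),
    ∃ (y : Fin m → ℝ) (x : Fin (n + 1) → ℝ),
      0 ≤ A.vecMul y ∧ 0 ≤ x ∧ A.mulVec x = 0 ∧ 0 < x 0 + A.vecMul y 0 := by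
  intro n
  induction n with
  | zero =>
    intro m A
    by_cases h : ∀ r, A r 0 = 0
    · refine ⟨0, fun _ => 1, ?_, ?_, ?_, ?_⟩
      · simp [Matrix.vecMul_zero]
      · intro i; norm_num
      · funext r
        simp [Matrix.mulVec, dotProduct, Fin.sum_univ_one, h r]
      · simp [Matrix.vecMul_zero]
    · push_neg at h
      obtain ⟨r, hr⟩ := h
      refine ⟨fun r' => A r' 0, 0, ?_, le_refl _, ?_, ?_⟩
      · intro i
        have hi : i = 0 := by omega
        subst hi
        simp only [Matrix.vecMul, dotProduct, Pi.zero_apply]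
        exact Finset.sum_nonneg fun r' _ => mul_self_nonneg _
      · simp [Matrix.mulVec_zero]
      · have : (0 : ℝ) < ∑ r', A r' 0 * A r' 0 := by
          apply Finset.sum_pos' (fun r' _ => mul_self_nonneg _)
          exact ⟨r, Finset.mem_univ r, mul_self_pos.mpr hr⟩
        simpa [Matrix.vecMul, dotProduct] using this
  | succ n ih =>
    intro m A
    set A' : Matrix (Fin m) (Fin (n + 1)) ℝ := Matrix.of fun r i => A r i.castSucc with hA'
    obtain ⟨y, x', hy, hx', hAx', hpos⟩ := ih m A'
    have hvm' : ∀ (v : Fin m → ℝ) (i : Fin (n + 1)),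
        A'.vecMul v i = A.vecMul v i.castSucc := by
      intro v i; simp [Matrix.vecMul, dotProduct, hA']
    have hmv' : ∀ (v : Fin (n + 1) → ℝ) (r : Fin m),
        A'.mulVec v r = ∑ i : Fin (n + 1), A r i.castSucc * v i := by
      intro v r; simp [Matrix.mulVec, dotProduct, hA']
    have linA : ∀ (a b : Fin m → ℝ) (t : ℝ) (i : Fin (n + 2)),
        A.vecMul (fun r => a r - t * b r) i = A.vecMul a i - t * A.vecMul b i := by
      intro a b t i
      simp only [Matrix.vecMul, dotProduct, sub_mul]
      rw [Finset.sum_sub_distrib, Finset.mul_sum]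
      congr 1
      exact Finset.sum_congr rfl fun r _ => by ring
    by_cases hl : 0 ≤ A.vecMul y (Fin.last (n + 1))
    · refine ⟨y, Fin.snoc x' 0, ?_, ?_, ?_, ?_⟩
      · intro i
        induction i using Fin.lastCases with
        | last => exact hl
        | cast i => rw [← hvm']; exact hy i
      · intro i
        induction i using Fin.lastCases with
        | last => simp only [Pi.zero_apply, Fin.snoc_last]; exact le_rfl
        | cast i => simpa using hx' i
      · funext r
        have h0 : A'.mulVec x' r = 0 := by rw [hAx']; rfl
        rw [hmv'] at h0
        simp only [Matrix.mulVec, dotProduct, Pi.zero_apply]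
        rw [Fin.sum_univ_castSucc]
        simp [h0]
      · have h0 : (0 : Fin (n + 2)) = Fin.castSucc 0 := rfl
        rw [h0, Fin.snoc_castSucc, ← hvm']
        exact hpos
    · push_neg at hl
      set lam : ℝ := A.vecMul y (Fin.last (n + 1)) with hlam
      have hlam0 : lam ≠ 0 := ne_of_lt hl
      set B : Matrix (Fin m) (Fin (n + 1)) ℝ :=
        Matrix.of fun r i =>
          A r i.castSucc - (A.vecMul y i.castSucc / lam) * A r (Fin.last (n + 1)) with hB
      obtain ⟨u, z, hu, hz, hBz, hposB⟩ := ih m B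
      have hBu : ∀ i : Fin (n + 1), B.vecMul u i
          = A.vecMul u i.castSucc
            - (A.vecMul y i.castSucc / lam) * A.vecMul u (Fin.last (n + 1)) := by
        intro i
        rw [hB]
        simp only [Matrix.vecMul, dotProduct, Matrix.of_apply, mul_sub]
        rw [Finset.sum_sub_distrib]
        congr 1
        rw [Finset.mul_sum]
        exact Finset.sum_congr rfl fun r _ => by ring
      have key : ∀ i : Fin (n + 1),
          A.vecMul (fun r => u r - (A.vecMul u (Fin.last (n + 1)) / lam) * y r) i.castSucc
            = B.vecMul u i := by
        intro i
        rw [linA, hBu]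
        ring
      have keylast :
          A.vecMul (fun r => u r - (A.vecMul u (Fin.last (n + 1)) / lam) * y r)
            (Fin.last (n + 1)) = 0 := by
        rw [linA, ← hlam, div_mul_cancel₀ _ hlam0, sub_self]
      refine ⟨fun r => u r - (A.vecMul u (Fin.last (n + 1)) / lam) * y r,
        Fin.snoc z ((-(∑ i : Fin (n + 1), z i * A.vecMul y i.castSucc)) / lam),
        ?_, ?_, ?_, ?_⟩
      · intro i
        induction i using Fin.lastCases with
        | last => rw [keylast]; exact le_rfl
        | cast i => rw [key]; exact hu i
      · intro i
        induction i using Fin.lastCases with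
        | last =>
          simp only [Fin.snoc_last, Pi.zero_apply]
          apply div_nonneg_of_nonpos _ (le_of_lt hl)
          simp only [neg_nonpos]
          exact Finset.sum_nonneg fun i _ =>
            mul_nonneg (hz i) (by rw [← hvm']; exact hy i)
        | cast i => simpa using hz i
      · funext r
        have h0 : B.mulVec z r = 0 := by rw [hBz]; rfl
        rw [hB] at h0
        simp only [Matrix.mulVec, dotProduct, Matrix.of_apply, sub_mul] at h0
        rw [Finset.sum_sub_distrib] at h0
        have hsum : ∑ i : Fin (n + 1), A r i.castSucc * z i
            = ∑ i : Fin (n + 1), A.vecMul y i.castSucc / lam * A r (Fin.last (n + 1)) * z i :=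
          sub_eq_zero.mp h0
        simp only [Matrix.mulVec, dotProduct, Pi.zero_apply]
        rw [Fin.sum_univ_castSucc]
        simp only [Fin.snoc_castSucc, Fin.snoc_last]
        rw [hsum]
        have hmulsum : ∑ i : Fin (n + 1),
            A.vecMul y i.castSucc / lam * A r (Fin.last (n + 1)) * z i
            = A r (Fin.last (n + 1)) / lam
              * ∑ i : Fin (n + 1), z i * A.vecMul y i.castSucc := by
          rw [Finset.mul_sum]
          exact Finset.sum_congr rfl fun i _ => by ring
        rw [hmulsum]
        ring
      · have h0 : (0 : Fin (n + 2)) = Fin.castSucc 0 := rfl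
        rw [h0, Fin.snoc_castSucc, key]
        exact hposB

theorem tucker_lemma (m n : ℕ) (A : Matrix (Fin m) (Fin n) ℝ) (j : Fin n) :
    ∃ (y : Fin m → ℝ) (x : Fin n → ℝ),
      0 ≤ A.vecMul y ∧ 0 ≤ x ∧ A.mulVec x = 0 ∧ 0 < x j + A.vecMul y j := by
  cases n with
  | zero => exact j.elim0
  | succ n =>
    set e : Fin (n + 1) ≃ Fin (n + 1) := Equiv.swap 0 j with he
    obtain ⟨y, x₂, hy, hx₂, hAx₂, hpos⟩ := tucker_aux n m (A.submatrix id e)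
    have hvm : ∀ i, (A.submatrix id e).vecMul y i = A.vecMul y (e i) := by
      intro i; simp [Matrix.vecMul, dotProduct]
    refine ⟨y, x₂ ∘ e.symm, ?_, ?_, ?_, ?_⟩
    · intro i
      have h := hy (e.symm i)
      rwa [hvm, Equiv.apply_symm_apply] at h
    · intro i; exact hx₂ (e.symm i)
    · funext r
      have h0 : (A.submatrix id e).mulVec x₂ r = 0 := by rw [hAx₂]; rfl
      simp only [Matrix.mulVec, dotProduct, Matrix.submatrix_apply, id] at h0 ⊢
      simp only [Pi.zero_apply]
      rw [← h0]
      exact (Fintype.sum_equiv e _ _ fun i => by simp).symm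
    · have h1 : e.symm j = 0 := by simp [he]
      have h2 : A.vecMul y j = (A.submatrix id e).vecMul y 0 := by
        rw [hvm, he, Equiv.swap_apply_left]
      rw [h2, Function.comp_apply, h1]
      exact hpos
end

section
/- Let A be an m×n real matrix. There exist y ∈ ℝ^m and x ∈ ℝ^n such that yᵀA ≥ 0ᵀ, x ≥ 0, Ax = 0, and xᵀ + yᵀA > 0ᵀ (i.e., for every j, x_j + (yᵀA)_j > 0). -/
/-!
For a fixed column `j`, Farkas' lemma applied to `A` with the extra row `e_jᵀ` and right-hand
side `(1, 0)` gives either `x ≥ 0` with `A x = 0`, `x_j = 1`, or `y` with `yᵀA ≥ 0`,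
`(yᵀA)_j > 0`. Either way column `j` gets an admissible pair `(y, x)` with `x_j + (yᵀA)_j > 0`,
and the sum of these pairs over all `j` works for every column at once.
Farkas' lemma is hyperplane separation from the cone `{B x | x ≥ 0}`, which is closed because,
by Carathéodory's theorem, it is a finite union of images of orthants under injective linear maps.
-/

open Finset Matrix

section Caratheodory

variable {𝕜 : Type*} [Field 𝕜] [LinearOrder 𝕜] [IsStrictOrderedRing 𝕜] {ι : Type*}

theorem Finset.exists_nonneg_sub_mul_eq_zero {s : Finset ι} {c g : ι → 𝕜}
    (hc : ∀ i ∈ s, 0 ≤ c i) (hg : ∃ i ∈ s, 0 < g i) :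
    ∃ τ : 𝕜, (∀ i ∈ s, 0 ≤ c i - τ * g i) ∧ ∃ i₀ ∈ s, c i₀ - τ * g i₀ = 0 := by
  obtain ⟨i, hi, hgi⟩ := hg
  obtain ⟨i₀, hi₀, hmin⟩ := (s.filter (0 < g ·)).exists_min_image (fun i => c i / g i)
    ⟨i, mem_filter.2 ⟨hi, hgi⟩⟩
  rw [mem_filter] at hi₀
  have hτ : 0 ≤ c i₀ / g i₀ := div_nonneg (hc i₀ hi₀.1) hi₀.2.le
  refine ⟨c i₀ / g i₀, fun i hi => ?_, i₀, hi₀.1, by rw [div_mul_cancel₀ _ hi₀.2.ne', sub_self]⟩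
  rcases le_or_gt (g i) 0 with hgi | hgi
  · linarith [hc i hi, mul_nonpos_of_nonneg_of_nonpos hτ hgi]
  · have := hmin i (mem_filter.2 ⟨hi, hgi⟩)
    rw [le_div_iff₀ hgi] at this
    linarith

variable {E : Type*} [AddCommGroup E] [Module 𝕜 E]

theorem exists_linearIndepOn_nonneg_sum_smul_eq [DecidableEq ι] (v : ι → E) (s : Finset ι)
    (c : ι → 𝕜) (hc : ∀ i ∈ s, 0 ≤ c i) :
    ∃ t : Finset ι, LinearIndepOn 𝕜 v t ∧
      ∃ d : ι → 𝕜, (∀ i ∈ t, 0 ≤ d i) ∧ ∑ i ∈ t, d i • v i = ∑ i ∈ s, c i • v i := by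
  induction s using Finset.strongInduction generalizing c with
  | _ s ih =>
  by_cases hs : LinearIndepOn 𝕜 v s
  · exact ⟨s, hs, c, hc, rfl⟩
  obtain ⟨g, hg, i, hi, hgi⟩ := not_linearIndepOn_finset_iff.1 hs
  obtain ⟨g, hg, hpos⟩ : ∃ g : ι → 𝕜, ∑ i ∈ s, g i • v i = 0 ∧ ∃ i ∈ s, 0 < g i := by
    rcases hgi.lt_or_gt with hgi | hgi
    · exact ⟨-g, by simp [hg], i, hi, by simpa using hgi⟩
    · exact ⟨g, hg, i, hi, hgi⟩
  obtain ⟨τ, hτ, i₀, hi₀, hzero⟩ := exists_nonneg_sub_mul_eq_zero hc hpos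
  have hsum : ∑ i ∈ s.erase i₀, (c i - τ * g i) • v i = ∑ i ∈ s, c i • v i := by
    rw [sum_erase _ (by rw [hzero, zero_smul])]
    simp only [sub_smul, mul_smul, sum_sub_distrib, ← smul_sum, hg, smul_zero, sub_zero]
  rw [← hsum]
  exact ih _ (erase_ssubset hi₀) _ fun i hi => hτ i (mem_of_mem_erase hi)

end Caratheodory

section Closed

variable {ι E : Type*} [Fintype ι] [AddCommGroup E] [Module ℝ E] [TopologicalSpace E]
  [IsTopologicalAddGroup E] [ContinuousSMul ℝ E] [T2Space E]

theorem LinearIndependent.isClosed_image_nonneg {v : ι → E} (hv : LinearIndependent ℝ v) :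
    IsClosed (Fintype.linearCombination ℝ v '' Set.Ici 0) :=
  (LinearMap.isClosedEmbedding_of_injective (LinearMap.ker_eq_bot.2
    (linearIndependent_iff_injective_fintypeLinearCombination.1 hv))).isClosedMap _ isClosed_Ici

theorem LinearMap.isClosed_image_nonneg (L : (ι → ℝ) →ₗ[ℝ] E) : IsClosed (L '' Set.Ici 0) := by
  classical
  set v : ι → E := fun i => L (Pi.single i 1)
  suffices L '' Set.Ici 0 = ⋃ (t : Finset ι) (_ : LinearIndepOn ℝ v t),
      Fintype.linearCombination ℝ (fun i : t => v i) '' Set.Ici 0 by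
    rw [this]
    exact isClosed_iUnion_of_finite fun t => isClosed_iUnion_of_finite fun ht =>
      ht.isClosed_image_nonneg
  ext x
  simp only [Set.mem_image, Set.mem_iUnion, Set.mem_Ici, Fintype.linearCombination_apply]
  constructor
  · rintro ⟨c, hc, rfl⟩
    obtain ⟨t, ht, d, hd, hdc⟩ :=
      exists_linearIndepOn_nonneg_sum_smul_eq v univ c fun i _ => hc i
    refine ⟨t, ht, fun i => d i, fun i => hd i i.2, ?_⟩
    rw [sum_coe_sort t fun i => d i • v i, hdc]
    conv_rhs => rw [pi_eq_sum_univ' c]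
    simp [v, map_sum]
  · rintro ⟨t, -, d, hd, rfl⟩
    refine ⟨∑ i : t, d i • Pi.single (i : ι) 1, sum_nonneg fun i _ => smul_nonneg (hd i) ?_, ?_⟩
    · exact Pi.single_nonneg.2 zero_le_one
    · simp [v, map_sum]

end Closed

theorem Matrix.exists_nonneg_mulVec_eq_or_exists_vecMul_nonneg {m n : Type*} [Fintype m]
    [Fintype n] (B : Matrix m n ℝ) (b : m → ℝ) :
    (∃ x, 0 ≤ x ∧ B *ᵥ x = b) ∨ ∃ y, 0 ≤ y ᵥ* B ∧ y ⬝ᵥ b < 0 := by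
  classical
  refine or_iff_not_imp_left.2 fun hb => ?_
  let C : ProperCone ℝ (m → ℝ) :=
    ⟨(PointedCone.positive ℝ (n → ℝ)).map B.mulVecLin, B.mulVecLin.isClosed_image_nonneg⟩
  obtain ⟨f, hfC, hfb⟩ := C.hyperplane_separation_point (x₀ := b) hb
  have hf : ∀ w, f w = (fun i => f (Pi.single i 1)) ⬝ᵥ w := fun w =>
    (LinearMap.congr_fun ((dotProductEquiv ℝ m).apply_symm_apply f.toLinearMap) w).symm
  refine ⟨fun i => f (Pi.single i 1), fun k => ?_, by rwa [← hf]⟩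
  have := hfC (B *ᵥ Pi.single k 1) ⟨Pi.single k 1, Pi.single_nonneg.2 zero_le_one, rfl⟩
  rwa [hf, dotProduct_mulVec, dotProduct_single_one] at this

theorem Matrix.exists_vecMul_pos_or_exists_mulVec_eq_zero {m n : Type*} [Fintype m] [Fintype n]
    [DecidableEq n] (A : Matrix m n ℝ) (j : n) :
    (∃ y, 0 ≤ y ᵥ* A ∧ 0 < (y ᵥ* A) j) ∨ ∃ x, 0 ≤ x ∧ A *ᵥ x = 0 ∧ 0 < x j := by
  set B := fromRows (replicateRow Unit (Pi.single j 1)) A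
  rcases B.exists_nonneg_mulVec_eq_or_exists_vecMul_nonneg (Sum.elim 1 0) with
    ⟨x, hx, hAx⟩ | ⟨y, hy, hyb⟩
  · rw [fromRows_mulVec, Sum.elim_eq_iff] at hAx
    have hxj : Pi.single j 1 ⬝ᵥ x = 1 := congr_fun hAx.1 ()
    rw [single_one_dotProduct] at hxj
    exact .inr ⟨x, hx, hAx.2, by simp [hxj]⟩
  · have hrow : ∀ k, (y ᵥ* B) k =
        y (.inl ()) * (Pi.single j 1 : n → ℝ) k + (y ∘ Sum.inr ᵥ* A) k := by
      intro k; simp [B, vecMul, dotProduct, replicateRow]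
    have hy₀ : y (.inl ()) < 0 := by simpa [dotProduct] using hyb
    refine .inl ⟨y ∘ Sum.inr, fun k => ?_, ?_⟩
    · have h : (0 : ℝ) ≤ _ := hrow k ▸ hy k
      have hej : (0 : n → ℝ) ≤ Pi.single j 1 := Pi.single_nonneg.2 zero_le_one
      exact h.trans (add_le_of_nonpos_left (mul_nonpos_of_nonpos_of_nonneg hy₀.le (hej k)))
    · have h : (0 : ℝ) ≤ _ := hrow j ▸ hy j
      rw [Pi.single_eq_same, mul_one] at h
      linarith

theorem tucker_theorem (m n : ℕ) (A : Matrix (Fin m) (Fin n) ℝ) :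
    ∃ (y : Fin m → ℝ) (x : Fin n → ℝ),
      0 ≤ A.vecMul y ∧ 0 ≤ x ∧ A.mulVec x = 0 ∧ ∀ j, 0 < x j + A.vecMul y j := by
  have column : ∀ j, ∃ (y : Fin m → ℝ) (x : Fin n → ℝ),
      0 ≤ y ᵥ* A ∧ 0 ≤ x ∧ A *ᵥ x = 0 ∧ 0 < x j + (y ᵥ* A) j := fun j =>
    match A.exists_vecMul_pos_or_exists_mulVec_eq_zero j with
    | .inl ⟨y, hy, hyj⟩ => ⟨y, 0, hy, le_rfl, mulVec_zero A, by simpa using hyj⟩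
    | .inr ⟨x, hx, hAx, hxj⟩ => ⟨0, x, by simp, hx, hAx, by simpa using hxj⟩
  choose Y X hY hX hAX hpos using column
  refine ⟨∑ j, Y j, ∑ j, X j, ?_, sum_nonneg fun j _ => hX j, ?_, fun j => ?_⟩
  · rw [sum_vecMul]
    exact sum_nonneg fun j _ => hY j
  · rw [mulVec_sum]
    exact sum_eq_zero fun j _ => hAX j
  · rw [sum_vecMul, Finset.sum_apply, Finset.sum_apply, ← sum_add_distrib]
    exact (hpos j).trans_le <| single_le_sum (f := fun k => X k j + (Y k ᵥ* A) j)
      (fun k _ => add_nonneg (hX k j) (hY k j)) (mem_univ j)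
end

section
/- Let B be a k×k real skew-symmetric matrix (B = −Bᵀ). Then there exists z ∈ ℝ^k with z ≥ 0, Bz ≤ 0, and z − Bz > 0 (every component of z − Bz strictly positive). -/
/-!
For each `i`, Farkas' lemma applied to `B` and `-eᵢ` gives `x ≥ 0` with `B x ≤ 0` and either
`(B x)ᵢ < 0` or, since skew-symmetry turns `yᵀ B ≥ 0` into `B y ≤ 0`, `xᵢ > 0`; the sum of these
`k` vectors is the required `z`. Farkas' lemma is hyperplane separation from the cone spanned by
the columns of `B` and the standard basis vectors. That cone is closed: by the conic Carathéodory
argument, a finitely generated cone is a finite union of cones over linearly independent vectors,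
each of which is the image of the closed orthant under an injective linear map.
-/

open Finset Topology

lemma exists_sub_mul_nonneg_and_eq_zero {𝕜 ι : Type*} [Field 𝕜] [LinearOrder 𝕜]
    [IsStrictOrderedRing 𝕜] [Fintype ι] {c g : ι → 𝕜} (hc : 0 ≤ c) (hg : g ≠ 0) :
    ∃ t : 𝕜, (∀ i, 0 ≤ c i - t * g i) ∧ ∃ j, c j - t * g j = 0 := by
  have of_pos : ∀ g : ι → 𝕜, (∃ i, 0 < g i) →
      ∃ t : 𝕜, (∀ i, 0 ≤ c i - t * g i) ∧ ∃ j, c j - t * g j = 0 := by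
    rintro g ⟨i, hi⟩
    obtain ⟨j, hj, hmin⟩ := (univ.filter (0 < g ·)).exists_min_image (fun i => c i / g i)
      ⟨i, by simpa using hi⟩
    rw [mem_filter] at hj
    refine ⟨c j / g j, fun i => ?_, j, by rw [div_mul_cancel₀ _ hj.2.ne', sub_self]⟩
    rcases lt_or_ge 0 (g i) with hgi | hgi
    · have := hmin i (by simpa using hgi)
      rw [le_div_iff₀ hgi] at this
      linarith
    · linarith [mul_nonpos_of_nonneg_of_nonpos (div_nonneg (hc j) hj.2.le) hgi,
        show 0 ≤ c i from hc i]
  obtain ⟨i, hi⟩ := Function.ne_iff.mp hg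
  rcases hi.lt_or_gt with hneg | hpos
  · obtain ⟨t, ht, j, hj⟩ := of_pos (-g) ⟨i, by simpa using hneg⟩
    exact ⟨-t, fun i => by simpa using ht i, j, by simpa using hj⟩
  · exact of_pos g ⟨i, hpos⟩

namespace PointedCone

section LinearOrderedField

variable {𝕜 E : Type*} [Field 𝕜] [LinearOrder 𝕜] [IsStrictOrderedRing 𝕜]
  [AddCommGroup E] [Module 𝕜 E]

lemma mem_hull_range_iff {ι : Type*} [Fintype ι] {g : ι → E} {x : E} :
    x ∈ hull 𝕜 (Set.range g) ↔ ∃ c : ι → 𝕜, 0 ≤ c ∧ ∑ i, c i • g i = x := by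
  rw [hull, Submodule.mem_span_range_iff_exists_fun]
  constructor
  · rintro ⟨c, rfl⟩
    exact ⟨fun i => c i, fun i => (c i).2, rfl⟩
  · rintro ⟨c, hc, rfl⟩
    exact ⟨fun i => ⟨c i, hc i⟩, rfl⟩

lemma mem_hull_finset_iff {s : Finset E} {x : E} :
    x ∈ hull 𝕜 (s : Set E) ↔ ∃ c : s → 𝕜, 0 ≤ c ∧ ∑ v : s, c v • (v : E) = x := by
  simpa using mem_hull_range_iff (g := ((↑) : s → E))

/-- Conic Carathéodory step: a linear relation among the generators lets one coefficient be
shifted to zero while keeping all of them nonnegative. -/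
lemma exists_mem_hull_erase_of_not_linearIndepOn [DecidableEq E] {s : Finset E}
    (hs : ¬LinearIndepOn 𝕜 id (s : Set E)) {x : E} (hx : x ∈ hull 𝕜 (s : Set E)) :
    ∃ v ∈ s, x ∈ hull 𝕜 (s.erase v : Set E) := by
  obtain ⟨c, hc, rfl⟩ := mem_hull_finset_iff.mp hx
  obtain ⟨g, hg, i, hi⟩ := Fintype.not_linearIndependent_iff.mp hs
  replace hg : ∑ v : s, g v • (v : E) = 0 := hg
  obtain ⟨t, ht, j, hj⟩ := exists_sub_mul_nonneg_and_eq_zero hc (Function.ne_iff.mpr ⟨i, hi⟩)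
  have hsum : ∑ v : s, c v • (v : E) = ∑ v : s, (c v - t * g v) • (v : E) := by
    simp only [sub_smul, mul_smul, sum_sub_distrib, ← smul_sum]
    rw [hg, smul_zero, sub_zero]
  refine ⟨j, j.2, hsum ▸ Submodule.sum_mem _ fun v _ => ?_⟩
  obtain rfl | hvj := eq_or_ne v j
  · simp [hj]
  · exact smul_mem _ (ht v) (subset_hull (mem_erase.mpr ⟨Subtype.coe_ne_coe.mpr hvj, v.2⟩))

end LinearOrderedField

variable {E : Type*} [AddCommGroup E] [Module ℝ E] [TopologicalSpace E] [IsTopologicalAddGroup E]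
  [ContinuousSMul ℝ E] [T2Space E]

lemma isClosed_hull_of_linearIndepOn {s : Finset E} (hs : LinearIndepOn ℝ id (s : Set E)) :
    IsClosed (hull ℝ (s : Set E) : Set E) := by
  let L := Fintype.linearCombination ℝ ((↑) : s → E)
  have hL : IsClosedEmbedding L := LinearMap.isClosedEmbedding_of_injective
    (LinearMap.ker_eq_bot.mpr (linearIndependent_iff_injective_fintypeLinearCombination.mp hs))
  have : (hull ℝ (s : Set E) : Set E) = L '' Set.Ici 0 := by
    ext x
    simp [L, mem_hull_finset_iff, Fintype.linearCombination_apply]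
  rw [this]
  exact hL.isClosedMap _ isClosed_Ici

theorem isClosed_hull_finset (s : Finset E) : IsClosed (hull ℝ (s : Set E) : Set E) := by
  classical
  induction s using Finset.strongInduction with
  | H s ih =>
  by_cases hs : LinearIndepOn ℝ id (s : Set E)
  · exact isClosed_hull_of_linearIndepOn hs
  have hunion : (hull ℝ (s : Set E) : Set E) = ⋃ v ∈ s, (hull ℝ (s.erase v : Set E) : Set E) := by
    refine subset_antisymm (fun x hx => ?_)
      (Set.iUnion₂_subset fun v _ => Submodule.span_mono (by simp))
    simpa using exists_mem_hull_erase_of_not_linearIndepOn hs hx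
  rw [hunion]
  exact s.finite_toSet.isClosed_biUnion fun v hv => ih _ (erase_ssubset hv)

theorem FG.isClosed {C : PointedCone ℝ E} (hC : C.FG) : IsClosed (C : Set E) := by
  obtain ⟨s, rfl⟩ := hC
  exact isClosed_hull_finset s

end PointedCone

namespace Matrix

variable {m n : Type*} [Fintype m] [Fintype n]

theorem exists_nonneg_mulVec_le_or_exists_nonneg_vecMul_nonneg (M : Matrix m n ℝ) (b : m → ℝ) :
    (∃ x, 0 ≤ x ∧ M *ᵥ x ≤ b) ∨ ∃ y, 0 ≤ y ∧ 0 ≤ y ᵥ* M ∧ y ⬝ᵥ b < 0 := by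
  classical
  -- The standard basis vectors absorb the slack `b - M *ᵥ x`.
  let gen : n ⊕ m → m → ℝ := Sum.elim (fun j => Mᵀ j) (fun i => Pi.single i 1)
  let C : PointedCone ℝ (m → ℝ) := PointedCone.hull ℝ (Set.range gen)
  by_cases hb : b ∈ C
  · left
    obtain ⟨c, hc, rfl⟩ := PointedCone.mem_hull_range_iff.mp hb
    refine ⟨fun j => c (.inl j), fun j => hc (.inl j), fun i => ?_⟩
    have : 0 ≤ c (.inr i) := hc (.inr i)
    simpa [gen, Fintype.sum_sum_type, mulVec, dotProduct, Pi.single_apply, mul_comm] using this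
  · right
    have hC : IsClosed (C : Set (m → ℝ)) :=
      PointedCone.FG.isClosed (Submodule.fg_span (Set.finite_range gen))
    obtain ⟨f, hfC, hfb⟩ := ProperCone.hyperplane_separation_point ⟨C, hC⟩ hb
    obtain ⟨y, hy⟩ := (dotProductEquiv ℝ m).surjective f.toLinearMap
    have hf : ∀ v, f v = y ⬝ᵥ v := fun v => (LinearMap.congr_fun hy v).symm
    have hgen : ∀ g, 0 ≤ y ⬝ᵥ gen g := fun g => hf _ ▸ hfC _ (PointedCone.subset_hull ⟨g, rfl⟩)
    refine ⟨y, fun i => by simpa [gen] using hgen (.inr i), fun j => hgen (.inl j), ?_⟩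
    rwa [← hf]

lemma exists_nonneg_mulVec_nonpos_sub_mulVec_pos {B : Matrix n n ℝ} (hB : B = -Bᵀ) (i : n) :
    ∃ x, 0 ≤ x ∧ B *ᵥ x ≤ 0 ∧ 0 < x i - (B *ᵥ x) i := by
  classical
  rcases exists_nonneg_mulVec_le_or_exists_nonneg_vecMul_nonneg B (-Pi.single i 1) with
    ⟨x, hx, hBx⟩ | ⟨y, hy, hyB, hyi⟩
  · have hBx_i : (B *ᵥ x) i ≤ -1 := by simpa using hBx i
    refine ⟨x, hx, hBx.trans (by simp [Pi.single_nonneg]), ?_⟩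
    linarith [show 0 ≤ x i from hx i]
  · have hskew : y ᵥ* B = -(B *ᵥ y) := by
      conv_lhs => rw [hB]
      rw [vecMul_neg, vecMul_transpose]
    have hyi : 0 < y i := by simpa using hyi
    refine ⟨y, hy, by simpa [hskew] using hyB, ?_⟩
    have : (B *ᵥ y) i ≤ 0 := by simpa [hskew] using hyB i
    linarith

end Matrix

open Matrix

theorem tucker_skew (k : ℕ) (B : Matrix (Fin k) (Fin k) ℝ) (hB : B = -B.transpose) :
    ∃ z : Fin k → ℝ, 0 ≤ z ∧ B.mulVec z ≤ 0 ∧ ∀ i, 0 < z i - B.mulVec z i := by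
  choose x hx hBx hpos using exists_nonneg_mulVec_nonpos_sub_mulVec_pos hB
  refine ⟨∑ i, x i, sum_nonneg fun i _ => hx i, ?_, fun i => ?_⟩
  · rw [mulVec_sum]
    exact sum_nonpos fun i _ => hBx i
  · rw [mulVec_sum, Finset.sum_apply, Finset.sum_apply, ← sum_sub_distrib]
    refine sum_pos' (fun j _ => ?_) ⟨i, mem_univ i, hpos i⟩
    linarith [show 0 ≤ x j i from hx j i, show (B *ᵥ x j) i ≤ 0 from hBx j i]
end

section
/- Let A be an m×n real matrix, b ∈ ℝ^m, c ∈ ℝ^n. If there exist x ≥ 0 with Ax ≤ b and y ≥ 0 with yᵀA ≥ cᵀ, then there exist such feasible x and y with cᵀx = yᵀb that additionally satisfy strict complementarity: y + (b − Ax) > 0 componentwise and xᵀ + (yᵀA − cᵀ) > 0ᵀ componentwise. -/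
/-!
Fourier–Motzkin elimination proves Gale's form of Farkas' lemma: an infeasible system `A x ≤ b`
has a certificate `y ≥ 0` with `yᵀA = 0` and `yᵀb < 0`. Applied to `z ≥ eᵢ, K z ≥ 0`, it gives
Tucker's theorem for a skew-symmetric `K`: for each `i` some `z ≥ 0` has `K z ≥ 0` and
`zᵢ + (K z)ᵢ > 0`, and the sum of these is strictly complementary in every coordinate.
For the LP, apply this to the skew matrix of the self-dual embedding in the variables `(y, x, t)`.
Feasibility of both programs together with weak duality rules out `t = 0`; scaling to `t = 1`
yields an optimal pair `(x, y)`, and the strict inequalities of Tucker's solution are exactly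
strict complementarity.
-/

open Matrix

variable {𝕜 : Type*} [Field 𝕜]

theorem Finite.exists_between_of_forall_le {α β γ : Type*} [Finite α] [Finite β] [LinearOrder γ]
    [Nonempty γ] {l : α → γ} {u : β → γ} (h : ∀ a b, l a ≤ u b) :
    ∃ t, (∀ a, l a ≤ t) ∧ ∀ b, t ≤ u b := by
  cases isEmpty_or_nonempty α
  · cases isEmpty_or_nonempty β
    · obtain ⟨t⟩ := ‹Nonempty γ›
      exact ⟨t, isEmptyElim, isEmptyElim⟩
    · obtain ⟨b₀, hb₀⟩ := Finite.exists_min u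
      exact ⟨u b₀, isEmptyElim, hb₀⟩
  · obtain ⟨a₀, ha₀⟩ := Finite.exists_max l
    exact ⟨l a₀, ha₀, h a₀⟩

namespace Matrix

section FourierMotzkin

variable [LinearOrder 𝕜] {ι : Type*} [DecidableEq ι]

/-- Fourier–Motzkin elimination of the variable with coefficient column `a`: every row is a
nonnegative combination of inequalities in which that variable cancels; index pairs `(p, q)`
that are not of opposite signs `a p > 0 > a q` give zero rows. -/
def fourierMotzkinMatrix (a : ι → 𝕜) : Matrix (ι ⊕ ι × ι) ι 𝕜 :=
  Matrix.of <| Sum.elim (fun i => if a i = 0 then Pi.single i 1 else 0) fun pq =>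
    if 0 < a pq.1 ∧ a pq.2 < 0 then -a pq.2 • Pi.single pq.1 1 + a pq.1 • Pi.single pq.2 1 else 0

theorem fourierMotzkinMatrix_nonneg [IsStrictOrderedRing 𝕜] (a : ι → 𝕜) (k : ι ⊕ ι × ι)
    (i : ι) : 0 ≤ fourierMotzkinMatrix a k i := by
  rcases k with j | ⟨p, q⟩
  · simp only [fourierMotzkinMatrix, of_apply, Sum.elim_inl]
    split_ifs
    · exact (Pi.single_nonneg.2 zero_le_one : (0 : ι → 𝕜) ≤ Pi.single j 1) i
    · rfl
  · simp only [fourierMotzkinMatrix, of_apply, Sum.elim_inr]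
    split_ifs with hpq
    · have := hpq.1
      have := hpq.2
      simp only [Pi.add_apply, Pi.smul_apply, Pi.single_apply, smul_eq_mul]
      split_ifs <;> linarith
    · rfl

variable [Fintype ι]

theorem fourierMotzkinMatrix_mulVec_inl (a v : ι → 𝕜) (i : ι) :
    (fourierMotzkinMatrix a *ᵥ v) (.inl i) = if a i = 0 then v i else 0 := by
  split_ifs <;> simp [fourierMotzkinMatrix, mulVec, *]

theorem fourierMotzkinMatrix_mulVec_inr (a v : ι → 𝕜) (p q : ι) :
    (fourierMotzkinMatrix a *ᵥ v) (.inr (p, q)) =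
      if 0 < a p ∧ a q < 0 then -a q * v p + a p * v q else 0 := by
  simp only [mulVec, fourierMotzkinMatrix, of_apply, Sum.elim_inr]
  split_ifs <;> simp only [add_dotProduct, smul_dotProduct, single_one_dotProduct, smul_eq_mul,
    zero_dotProduct]

theorem fourierMotzkinMatrix_mulVec_self (a : ι → 𝕜) : fourierMotzkinMatrix a *ᵥ a = 0 := by
  ext (i | ⟨p, q⟩)
  · simp +contextual [fourierMotzkinMatrix_mulVec_inl]
  · rw [fourierMotzkinMatrix_mulVec_inr]
    split_ifs <;> simp [mul_comm]

end FourierMotzkin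

section SelfDualEmbedding

variable {ι σ : Type*}

/-- The Goldman–Tucker self-dual embedding of the primal–dual pair, in the variables `(y, x, t)`. -/
def lpSkewMatrix (A : Matrix ι σ 𝕜) (b : ι → 𝕜) (c : σ → 𝕜) :
    Matrix (ι ⊕ σ ⊕ Unit) (ι ⊕ σ ⊕ Unit) 𝕜 :=
  Matrix.of fun
    | .inl _, .inl _ => 0
    | .inl i, .inr (.inl j) => -A i j
    | .inl i, .inr (.inr _) => b i
    | .inr (.inl j), .inl i => A i j
    | .inr (.inl _), .inr (.inl _) => 0
    | .inr (.inl j), .inr (.inr _) => -c j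
    | .inr (.inr _), .inl i => -b i
    | .inr (.inr _), .inr (.inl j) => c j
    | .inr (.inr _), .inr (.inr _) => 0

variable (A : Matrix ι σ 𝕜) (b : ι → 𝕜) (c : σ → 𝕜)

theorem lpSkewMatrix_transpose : (lpSkewMatrix A b c)ᵀ = -lpSkewMatrix A b c := by
  ext (_ | _ | _) (_ | _ | _) <;> simp [lpSkewMatrix]

variable [Fintype ι] [Fintype σ] (z : ι ⊕ σ ⊕ Unit → 𝕜)

theorem lpSkewMatrix_mulVec_inl (i : ι) :
    (lpSkewMatrix A b c *ᵥ z) (.inl i) =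
      z (.inr (.inr ())) * b i - (A *ᵥ fun j => z (.inr (.inl j))) i := by
  simp [lpSkewMatrix, mulVec, dotProduct, Fintype.sum_sum_type]
  ring

theorem lpSkewMatrix_mulVec_inr_inl (j : σ) :
    (lpSkewMatrix A b c *ᵥ z) (.inr (.inl j)) =
      ((fun i => z (.inl i)) ᵥ* A) j - z (.inr (.inr ())) * c j := by
  simp [lpSkewMatrix, mulVec, vecMul, dotProduct, Fintype.sum_sum_type, mul_comm]
  ring

theorem lpSkewMatrix_mulVec_inr_inr :
    (lpSkewMatrix A b c *ᵥ z) (.inr (.inr ())) =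
      c ⬝ᵥ (fun j => z (.inr (.inl j))) - (fun i => z (.inl i)) ⬝ᵥ b := by
  simp [lpSkewMatrix, mulVec, dotProduct, Fintype.sum_sum_type, mul_comm]
  ring

end SelfDualEmbedding

variable [LinearOrder 𝕜] [IsStrictOrderedRing 𝕜]

theorem exists_mul_le_of_nonneg_fourierMotzkinMatrix_mulVec {ι : Type*} [Fintype ι]
    [DecidableEq ι] {a r : ι → 𝕜} (h : 0 ≤ fourierMotzkinMatrix a *ᵥ r) :
    ∃ t, ∀ i, a i * t ≤ r i := by
  obtain ⟨t, hlow, hup⟩ := Finite.exists_between_of_forall_le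
    (l := fun q : {q // a q < 0} => r q / a q) (u := fun p : {p // 0 < a p} => r p / a p) <| by
      rintro ⟨q, hq⟩ ⟨p, hp⟩
      have hpq := h (.inr (p, q))
      rw [Pi.zero_apply, fourierMotzkinMatrix_mulVec_inr, if_pos ⟨hp, hq⟩] at hpq
      rw [← neg_div_neg_eq, div_le_div_iff₀ (neg_pos.2 hq) hp]
      linarith
  refine ⟨t, fun i => ?_⟩
  rcases lt_trichotomy (a i) 0 with hi | hi | hi
  · simpa [mul_comm] using (div_le_iff_of_neg hi).1 (hlow ⟨i, hi⟩)
  · simpa [fourierMotzkinMatrix_mulVec_inl, hi] using h (.inl i)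
  · simpa [mul_comm] using (le_div_iff₀ hi).1 (hup ⟨i, hi⟩)

theorem not_exists_fourierMotzkin_mulVec_le_of_not_exists_mulVec_le {ι σ : Type*} [Fintype ι]
    [DecidableEq ι] [Fintype σ] {A : Matrix ι (Option σ) 𝕜} {b : ι → 𝕜}
    (h : ¬∃ x, A *ᵥ x ≤ b) :
    ¬∃ x, (fourierMotzkinMatrix (fun i => A i none) * A.submatrix id some) *ᵥ x ≤
      fourierMotzkinMatrix (fun i => A i none) *ᵥ b := by
  rintro ⟨x, hx⟩
  rw [← mulVec_mulVec, ← sub_nonneg, ← mulVec_sub] at hx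
  obtain ⟨t, ht⟩ := exists_mul_le_of_nonneg_fourierMotzkinMatrix_mulVec hx
  refine h ⟨fun o => o.elim t x, fun i => ?_⟩
  have hi := ht i
  rw [Pi.sub_apply, le_sub_iff_add_le] at hi
  simpa [mulVec, dotProduct, Fintype.sum_option] using hi

theorem exists_nonneg_vecMul_eq_zero_dotProduct_neg_of_not_exists_mulVec_le {ι σ : Type*}
    [Fintype ι] [Fintype σ] (A : Matrix ι σ 𝕜) (b : ι → 𝕜) (h : ¬∃ x, A *ᵥ x ≤ b) :
    ∃ y, 0 ≤ y ∧ y ᵥ* A = 0 ∧ y ⬝ᵥ b < 0 := by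
  classical
  revert ι
  refine Fintype.induction_empty_option (P := fun σ _ => ∀ {ι : Type _} [Fintype ι]
    (A : Matrix ι σ 𝕜) (b : ι → 𝕜), (¬∃ x, A *ᵥ x ≤ b) → ∃ y, 0 ≤ y ∧ y ᵥ* A = 0 ∧ y ⬝ᵥ b < 0)
    ?_ ?_ ?_ σ
  · intro σ τ _ e ih ι _ A b h
    obtain ⟨y, hy, hyA, hyb⟩ := ih (A.submatrix id e) b fun ⟨x, hx⟩ =>
      h ⟨x ∘ e.symm, by simpa [submatrix_mulVec_equiv] using hx⟩
    refine ⟨y, hy, funext fun j => ?_, hyb⟩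
    simpa [vecMul, dotProduct] using congr_fun hyA (e.symm j)
  · intro ι _ A b h
    obtain ⟨i, hi⟩ : ∃ i, b i < 0 := by
      by_contra! hb
      exact h ⟨0, fun i => by simpa using hb i⟩
    exact ⟨Pi.single i 1, Pi.single_nonneg.2 zero_le_one, funext fun j => j.elim,
      by rwa [single_one_dotProduct]⟩
  · intro σ _ ih ι _ A b h
    obtain ⟨y, hy, hyA, hyb⟩ :=
      ih _ _ (not_exists_fourierMotzkin_mulVec_le_of_not_exists_mulVec_le h)
    refine ⟨y ᵥ* fourierMotzkinMatrix fun i => A i none,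
      fun i => dotProduct_nonneg_of_nonneg hy fun k => fourierMotzkinMatrix_nonneg _ k i, ?_,
      by rwa [← dotProduct_mulVec]⟩
    ext (_ | j)
    · change (y ᵥ* _) ⬝ᵥ (fun i => A i none) = 0
      rw [← dotProduct_mulVec, fourierMotzkinMatrix_mulVec_self, dotProduct_zero]
    · rw [vecMul_vecMul]
      exact congr_fun hyA j

structure IsStrictlyComplementary {ι : Type*} [Fintype ι] (K : Matrix ι ι 𝕜) (z : ι → 𝕜) :
    Prop where
  nonneg : 0 ≤ z
  mulVec_nonneg : 0 ≤ K *ᵥ z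
  add_mulVec_pos : ∀ i, 0 < z i + (K *ᵥ z) i

theorem IsStrictlyComplementary.smul {ι : Type*} [Fintype ι] {K : Matrix ι ι 𝕜} {z : ι → 𝕜}
    (hz : K.IsStrictlyComplementary z) {s : 𝕜} (hs : 0 < s) :
    K.IsStrictlyComplementary (s • z) where
  nonneg := smul_nonneg hs.le hz.nonneg
  mulVec_nonneg := by
    rw [mulVec_smul]
    exact smul_nonneg hs.le hz.mulVec_nonneg
  add_mulVec_pos i := by
    simpa [mulVec_smul, ← mul_add] using mul_pos hs (hz.add_mulVec_pos i)

theorem exists_nonneg_mulVec_nonneg_add_mulVec_pos_of_transpose_eq_neg {ι : Type*}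
    [Fintype ι] [DecidableEq ι] {K : Matrix ι ι 𝕜} (hK : Kᵀ = -K) (i : ι) :
    ∃ z, 0 ≤ z ∧ 0 ≤ K *ᵥ z ∧ 0 < z i + (K *ᵥ z) i := by
  by_cases hfeas : ∃ z, fromRows (-K) (-1) *ᵥ z ≤ Sum.elim (0 : ι → 𝕜) (-Pi.single i 1)
  · obtain ⟨z, hz⟩ := hfeas
    have hKz j : 0 ≤ (K *ᵥ z) j := by simpa [fromRows_mulVec, neg_mulVec] using hz (.inl j)
    have hze j : (Pi.single i 1 : ι → 𝕜) j ≤ z j := by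
      simpa [fromRows_mulVec, neg_mulVec] using hz (.inr j)
    have hz0 j : 0 ≤ z j := (Pi.single_nonneg.2 zero_le_one j).trans (hze j)
    have hzi : 1 ≤ z i := by simpa using hze i
    exact ⟨z, hz0, hKz, add_pos_of_pos_of_nonneg (zero_lt_one.trans_le hzi) (hKz i)⟩
  · obtain ⟨y, hy, hyK, hyb⟩ :=
      exists_nonneg_vecMul_eq_zero_dotProduct_neg_of_not_exists_mulVec_le _ _ hfeas
    -- skew-symmetry turns the certificate's equation `uᵀK + vᵀ = 0` into `K u = v`
    have hKy : K *ᵥ (y ∘ Sum.inl) = y ∘ Sum.inr := by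
      rw [vecMul_fromRows, vecMul_neg, ← mulVec_transpose, hK, neg_mulVec, neg_neg,
        vecMul_neg, vecMul_one, add_neg_eq_zero] at hyK
      exact hyK
    have hyi : 0 < y (.inr i) := by
      simpa [dotProduct, Fintype.sum_sum_type, Pi.single_apply] using hyb
    refine ⟨y ∘ Sum.inl, fun j => hy _, ?_, ?_⟩
    · rw [hKy]
      exact fun j => hy _
    · rw [hKy]
      exact add_pos_of_nonneg_of_pos (hy _) hyi

theorem exists_isStrictlyComplementary_of_transpose_eq_neg {ι : Type*} [Fintype ι]
    {K : Matrix ι ι 𝕜} (hK : Kᵀ = -K) : ∃ z, K.IsStrictlyComplementary z := by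
  classical
  choose Z hZ hKZ hpos using exists_nonneg_mulVec_nonneg_add_mulVec_pos_of_transpose_eq_neg hK
  refine ⟨∑ i, Z i, Finset.sum_nonneg fun i _ => hZ i, ?_, fun s => ?_⟩
  · rw [mulVec_sum]
    exact Finset.sum_nonneg fun i _ => hKZ i
  · rw [mulVec_sum, Finset.sum_apply, Finset.sum_apply, ← Finset.sum_add_distrib]
    exact Finset.sum_pos' (fun i _ => add_nonneg (hZ i s) (hKZ i s)) ⟨s, Finset.mem_univ _, hpos s⟩

theorem dotProduct_le_dotProduct_of_mulVec_le_of_le_vecMul {ι σ : Type*} [Fintype ι]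
    [Fintype σ] {A : Matrix ι σ 𝕜} {b : ι → 𝕜} {c : σ → 𝕜} {x : σ → 𝕜} {y : ι → 𝕜}
    (hx : 0 ≤ x) (hAx : A *ᵥ x ≤ b) (hy : 0 ≤ y) (hyA : c ≤ y ᵥ* A) : c ⬝ᵥ x ≤ y ⬝ᵥ b :=
  calc c ⬝ᵥ x ≤ (y ᵥ* A) ⬝ᵥ x := dotProduct_le_dotProduct_of_nonneg_right hyA hx
    _ = y ⬝ᵥ (A *ᵥ x) := (dotProduct_mulVec y A x).symm
    _ ≤ y ⬝ᵥ b := dotProduct_le_dotProduct_of_nonneg_left hAx hy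

theorem IsStrictlyComplementary.pos_of_lpSkewMatrix {ι σ : Type*} [Fintype ι] [Fintype σ]
    {A : Matrix ι σ 𝕜} {b : ι → 𝕜} {c : σ → 𝕜} {z : ι ⊕ σ ⊕ Unit → 𝕜}
    (hz : (lpSkewMatrix A b c).IsStrictlyComplementary z)
    (hP : ∃ x, 0 ≤ x ∧ A *ᵥ x ≤ b) (hD : ∃ y, 0 ≤ y ∧ c ≤ y ᵥ* A) :
    0 < z (.inr (.inr ())) := by
  obtain ⟨x₀, hx₀, hAx₀⟩ := hP
  obtain ⟨y₀, hy₀, hy₀A⟩ := hD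
  refine (show 0 ≤ z (.inr (.inr ())) from hz.nonneg _).lt_of_ne' fun ht => ?_
  have hx : 0 ≤ fun j => z (.inr (.inl j)) := fun _ => hz.nonneg _
  have hy : 0 ≤ fun i => z (.inl i) := fun _ => hz.nonneg _
  have hAx : (A *ᵥ fun j => z (.inr (.inl j))) ≤ 0 := fun i => by
    simpa [lpSkewMatrix_mulVec_inl, ht] using hz.mulVec_nonneg (.inl i)
  have hyA : 0 ≤ (fun i => z (.inl i)) ᵥ* A := fun j => by
    simpa [lpSkewMatrix_mulVec_inr_inl, ht] using hz.mulVec_nonneg (.inr (.inl j))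
  have hgap := hz.add_mulVec_pos (.inr (.inr ()))
  rw [lpSkewMatrix_mulVec_inr_inr, ht, zero_add, sub_pos] at hgap
  have hcx := dotProduct_le_dotProduct_of_mulVec_le_of_le_vecMul hx hAx hy₀ hy₀A
  have hyb := dotProduct_le_dotProduct_of_mulVec_le_of_le_vecMul hx₀ hAx₀ hy hyA
  rw [dotProduct_zero] at hcx
  rw [zero_dotProduct] at hyb
  linarith

theorem exists_strictly_complementary_optimal {ι σ : Type*} [Fintype ι] [Fintype σ]
    (A : Matrix ι σ 𝕜) (b : ι → 𝕜) (c : σ → 𝕜)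
    (hP : ∃ x, 0 ≤ x ∧ A *ᵥ x ≤ b) (hD : ∃ y, 0 ≤ y ∧ c ≤ y ᵥ* A) :
    ∃ x y, 0 ≤ x ∧ A *ᵥ x ≤ b ∧ 0 ≤ y ∧ c ≤ y ᵥ* A ∧ c ⬝ᵥ x = y ⬝ᵥ b ∧
      (∀ i, 0 < y i + (b i - (A *ᵥ x) i)) ∧ ∀ j, 0 < x j + ((y ᵥ* A) j - c j) := by
  obtain ⟨z₀, hz₀⟩ :=
    exists_isStrictlyComplementary_of_transpose_eq_neg (lpSkewMatrix_transpose A b c)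
  have ht := hz₀.pos_of_lpSkewMatrix hP hD
  obtain ⟨z, hz, hz1⟩ : ∃ z, (lpSkewMatrix A b c).IsStrictlyComplementary z ∧
      z (.inr (.inr ())) = 1 :=
    ⟨_, hz₀.smul (inv_pos.2 ht), inv_mul_cancel₀ ht.ne'⟩
  have hx : 0 ≤ fun j => z (.inr (.inl j)) := fun _ => hz.nonneg _
  have hy : 0 ≤ fun i => z (.inl i) := fun _ => hz.nonneg _
  have hAx : (A *ᵥ fun j => z (.inr (.inl j))) ≤ b := fun i => by
    simpa [lpSkewMatrix_mulVec_inl, hz1] using hz.mulVec_nonneg (.inl i)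
  have hyA : c ≤ (fun i => z (.inl i)) ᵥ* A := fun j => by
    simpa [lpSkewMatrix_mulVec_inr_inl, hz1] using hz.mulVec_nonneg (.inr (.inl j))
  have hgap := hz.mulVec_nonneg (.inr (.inr ()))
  rw [Pi.zero_apply, lpSkewMatrix_mulVec_inr_inr, sub_nonneg] at hgap
  refine ⟨_, _, hx, hAx, hy, hyA,
    (dotProduct_le_dotProduct_of_mulVec_le_of_le_vecMul hx hAx hy hyA).antisymm hgap,
    fun i => ?_, fun j => ?_⟩
  · simpa [lpSkewMatrix_mulVec_inl, hz1] using hz.add_mulVec_pos (.inl i)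
  · simpa [lpSkewMatrix_mulVec_inr_inl, hz1] using hz.add_mulVec_pos (.inr (.inl j))

end Matrix

theorem lp_strict_complementarity (m n : ℕ) (A : Matrix (Fin m) (Fin n) ℝ)
    (b : Fin m → ℝ) (c : Fin n → ℝ)
    (hP : ∃ x : Fin n → ℝ, 0 ≤ x ∧ A.mulVec x ≤ b)
    (hD : ∃ y : Fin m → ℝ, 0 ≤ y ∧ c ≤ A.vecMul y) :
    ∃ (x : Fin n → ℝ) (y : Fin m → ℝ),
      0 ≤ x ∧ A.mulVec x ≤ b ∧ 0 ≤ y ∧ c ≤ A.vecMul y ∧ c ⬝ᵥ x = y ⬝ᵥ b ∧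
      (∀ i, 0 < y i + (b i - A.mulVec x i)) ∧
      (∀ j, 0 < x j + (A.vecMul y j - c j)) :=
  A.exists_strictly_complementary_optimal b c hP hD
end

section
/- Let A be an m×n real matrix and b ∈ ℝ^m. If the system Ax = b, x ≥ 0 has a feasible solution, then it has a basic feasible solution, i.e., a solution x ≥ 0 with Ax = b such that the set of columns A_j with x_j > 0 is linearly independent. -/
open Finset

lemma reduce_support (m n : ℕ) (A : Matrix (Fin m) (Fin n) ℝ) (b : Fin m → ℝ)
    (x : Fin n → ℝ) (hAx : A.mulVec x = b) (hx : 0 ≤ x)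
    (c : Fin n → ℝ) (hAc : A.mulVec c = 0) (hsupp : ∀ j, c j ≠ 0 → 0 < x j)
    (j₁ : Fin n) (hc1 : 0 < c j₁) :
    ∃ y : Fin n → ℝ, A.mulVec y = b ∧ 0 ≤ y ∧
      (univ.filter fun j => 0 < y j).card < (univ.filter fun j => 0 < x j).card := by
  set S : Finset (Fin n) := univ.filter (fun j => 0 < c j) with hS
  have hSne : S.Nonempty := ⟨j₁, by simp [hS, hc1]⟩
  set t : ℝ := S.inf' hSne (fun j => x j / c j) with ht
  have htpos : 0 < t := by
    rw [ht, Finset.lt_inf'_iff]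
    intro j hj
    have hcj : 0 < c j := by simpa [hS] using hj
    exact div_pos (hsupp j (ne_of_gt hcj)) hcj
  set y : Fin n → ℝ := fun j => x j - t * c j with hy
  have hy0 : 0 ≤ y := by
    intro j
    rcases le_or_gt (c j) 0 with hcj | hcj
    · have : t * c j ≤ 0 := mul_nonpos_of_nonneg_of_nonpos htpos.le hcj
      have hxj : 0 ≤ x j := hx j
      simp only [hy, Pi.zero_apply]
      linarith
    · have hjS : j ∈ S := by simp [hS, hcj]
      have : t ≤ x j / c j := Finset.inf'_le _ hjS
      have : t * c j ≤ x j := by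
        rw [← le_div_iff₀ hcj] at *; exact this
      simp only [hy, Pi.zero_apply]; linarith
  have hAy : A.mulVec y = b := by
    have : y = x - t • c := by funext j; simp [hy, smul_eq_mul]
    rw [this, Matrix.mulVec_sub, Matrix.mulVec_smul, hAc, hAx]
    simp
  obtain ⟨j₂, hj₂S, hj₂⟩ := Finset.exists_mem_eq_inf' hSne (fun j => x j / c j)
  have hcj₂ : 0 < c j₂ := by simpa [hS] using hj₂S
  have hyj₂ : y j₂ = 0 := by
    simp only [hy]
    rw [← ht] at hj₂
    rw [hj₂, div_mul_cancel₀ _ (ne_of_gt hcj₂)]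
    ring
  refine ⟨y, hAy, hy0, Finset.card_lt_card ?_⟩
  constructor
  · intro j hj
    simp only [mem_filter, mem_univ, true_and] at hj ⊢
    by_contra hxj
    have hxj0 : x j = 0 := le_antisymm (not_lt.mp hxj) (hx j)
    have hcj0 : c j = 0 := by
      by_contra hc; exact absurd (hsupp j hc) (by rw [hxj0]; simp)
    simp [hy, hxj0, hcj0] at hj
  · intro hsub
    have hj₂x : j₂ ∈ univ.filter fun j => 0 < x j := by
      simp [hsupp j₂ (ne_of_gt hcj₂)]
    have := hsub hj₂x
    simp [hyj₂] at this

theorem basic_feasible_solution_exists (m n : ℕ) (A : Matrix (Fin m) (Fin n) ℝ)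
    (b : Fin m → ℝ)
    (h : ∃ x : Fin n → ℝ, A.mulVec x = b ∧ 0 ≤ x) :
    ∃ x : Fin n → ℝ, A.mulVec x = b ∧ 0 ≤ x ∧
      LinearIndependent ℝ (fun j : {j : Fin n // 0 < x j} => A.transpose j.1) := by
  obtain ⟨x, hAx, hx⟩ := h
  suffices H : ∀ k : ℕ, ∀ x : Fin n → ℝ,
      (univ.filter fun j => 0 < x j).card ≤ k → A.mulVec x = b → 0 ≤ x →
      ∃ y : Fin n → ℝ, A.mulVec y = b ∧ 0 ≤ y ∧
        LinearIndependent ℝ (fun j : {j : Fin n // 0 < y j} => A.transpose j.1) by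
    exact H _ x le_rfl hAx hx
  intro k
  induction k with
  | zero =>
    intro x hcard hAx hx
    refine ⟨x, hAx, hx, ?_⟩
    have hempty : (univ.filter fun j => 0 < x j) = ∅ :=
      Finset.card_eq_zero.mp (Nat.le_zero.mp hcard)
    haveI : IsEmpty {j : Fin n // 0 < x j} := by
      constructor
      rintro ⟨j, hj⟩
      have : j ∈ (univ.filter fun j => 0 < x j) := by simp [hj]
      simp [hempty] at this
    exact linearIndependent_empty_type
  | succ k ih =>
    intro x hcard hAx hx
    by_cases hli : LinearIndependent ℝ (fun j : {j : Fin n // 0 < x j} => A.transpose j.1)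
    · exact ⟨x, hAx, hx, hli⟩
    obtain ⟨g, hg0, j₀, hj₀⟩ := Fintype.not_linearIndependent_iff.mp hli
    -- choose sign so that some coefficient is positive
    obtain ⟨g', hg'0, hgpos⟩ :
        ∃ g' : {j : Fin n // 0 < x j} → ℝ,
          (∑ j, g' j • A.transpose j.1) = 0 ∧ 0 < g' j₀ := by
      rcases lt_or_gt_of_ne hj₀ with hneg | hpos
      · refine ⟨fun j => -(g j), ?_, by exact neg_pos.mpr hneg⟩
        simp only [neg_smul, Finset.sum_neg_distrib, hg0, neg_zero]
      · exact ⟨g, hg0, hpos⟩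
    set c : Fin n → ℝ := fun j => if h : 0 < x j then g' ⟨j, h⟩ else 0 with hc
    have hsupp : ∀ j, c j ≠ 0 → 0 < x j := by
      intro j hj
      by_contra hxj
      simp [hc, hxj] at hj
    have hAc : A.mulVec c = 0 := by
      funext i
      have h1 := congrFun hg'0 i
      rw [Finset.sum_apply] at h1
      simp only [Pi.smul_apply, Matrix.transpose_apply, smul_eq_mul, Pi.zero_apply] at h1
      show (∑ j, A i j * c j) = 0
      have e1 : ∑ j ∈ univ.filter (fun j => 0 < x j), A i j * c j = ∑ j, A i j * c j :=
        Finset.sum_filter_of_ne (fun j _ hne => hsupp j (fun hc0 => hne (by rw [hc0, mul_zero])))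
      rw [← e1, Finset.sum_subtype (p := fun j => 0 < x j) (univ.filter fun j => 0 < x j)
        (fun j => by simp) (fun j => A i j * c j)]
      refine Eq.trans ?_ h1
      apply Finset.sum_congr rfl
      intro j _
      simp only [hc]
      rw [dif_pos j.2, mul_comm]
    have hcj₀ : 0 < c j₀.1 := by
      simp only [hc]
      rw [dif_pos j₀.2]
      convert hgpos
    obtain ⟨y, hAy, hy0, hlt⟩ := reduce_support m n A b x hAx hx c hAc hsupp j₀.1 hcj₀
    exact ih y (by omega) hAy hy0
end

section
/- Let A be an m×n real matrix, b ∈ ℝ^m, c ∈ ℝ^n. Suppose Ax = b, x ≥ 0 is feasible and cᵀx is bounded below by some λ over all feasible x. Then for every feasible x there is a basic feasible solution x* (i.e., Ax* = b, x* ≥ 0, and the columns A_j with x*_j > 0 are linearly independent) with cᵀx* ≤ cᵀx. -/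
open Matrix Finset

-- Pivot step: given a direction d in kernel, supported on support of x,
-- with c⬝d ≤ 0 and some negative component, strictly shrink support.
lemma lp_step (m n : ℕ) (A : Matrix (Fin m) (Fin n) ℝ)
    (b : Fin m → ℝ) (c : Fin n → ℝ) (x d : Fin n → ℝ)
    (hx : A.mulVec x = b) (hx0 : 0 ≤ x)
    (hd : A.mulVec d = 0) (hcd : c ⬝ᵥ d ≤ 0)
    (hsupp : ∀ j, d j ≠ 0 → 0 < x j)
    (hneg : ∃ j, d j < 0) :
    ∃ x', A.mulVec x' = b ∧ 0 ≤ x' ∧ c ⬝ᵥ x' ≤ c ⬝ᵥ x ∧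
      (Finset.univ.filter fun j => 0 < x' j).card <
        (Finset.univ.filter fun j => 0 < x j).card := by
  classical
  set S : Finset (Fin n) := Finset.univ.filter (fun j => d j < 0) with hS
  have hSne : S.Nonempty := by
    obtain ⟨j, hj⟩ := hneg
    exact ⟨j, by simp [hS, hj]⟩
  obtain ⟨j0, hj0S, hj0min⟩ := S.exists_min_image (fun j => x j / (-d j)) hSne
  have hdj0 : d j0 < 0 := by simpa [hS] using hj0S
  set t : ℝ := x j0 / (-d j0) with ht
  have ht0 : 0 ≤ t := div_nonneg (hx0 j0) (by linarith)
  refine ⟨x + t • d, ?_, ?_, ?_, ?_⟩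
  · rw [Matrix.mulVec_add, Matrix.mulVec_smul, hd, hx]; simp
  · intro j
    rcases lt_or_ge (d j) 0 with hdj | hdj
    · have hjS : j ∈ S := by simp [hS, hdj]
      have hle : t ≤ x j / (-d j) := hj0min j hjS
      have : t * (-d j) ≤ x j := (le_div_iff₀ (by linarith)).mp hle
      simp only [Pi.add_apply, Pi.smul_apply, smul_eq_mul, Pi.zero_apply]
      nlinarith
    · have := hx0 j
      simp only [Pi.add_apply, Pi.smul_apply, smul_eq_mul, Pi.zero_apply] at *
      nlinarith
  · simp only [dotProduct_add, dotProduct_smul, smul_eq_mul]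
    nlinarith
  · apply Finset.card_lt_card
    constructor
    · intro j hj
      simp only [Finset.mem_filter, Finset.mem_univ, true_and] at hj ⊢
      by_cases hdj : d j = 0
      · simpa [Pi.add_apply, hdj] using hj
      · exact hsupp j hdj
    · intro hsub
      have hxj0 : 0 < x j0 := hsupp j0 (by linarith)
      have hj0mem : j0 ∈ Finset.univ.filter (fun j => 0 < x j) := by simp [hxj0]
      have := hsub hj0mem
      simp only [Finset.mem_filter, Finset.mem_univ, true_and, Pi.add_apply,
        Pi.smul_apply, smul_eq_mul] at this
      have hne : d j0 ≠ 0 := by linarith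
      have hzero : x j0 + t * d j0 = 0 := by
        rw [ht, div_mul_eq_mul_div, div_neg, mul_div_assoc, div_self hne, mul_one]
        ring
      linarith

-- Handle sign: any nonzero kernel direction supported on support of x yields improvement.
lemma lp_step2 (m n : ℕ) (A : Matrix (Fin m) (Fin n) ℝ)
    (b : Fin m → ℝ) (c : Fin n → ℝ) (lam : ℝ)
    (hbdd : ∀ x : Fin n → ℝ, A.mulVec x = b → 0 ≤ x → lam ≤ c ⬝ᵥ x)
    (x d : Fin n → ℝ)
    (hx : A.mulVec x = b) (hx0 : 0 ≤ x)
    (hd : A.mulVec d = 0) (hcd : c ⬝ᵥ d ≤ 0)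
    (hsupp : ∀ j, d j ≠ 0 → 0 < x j)
    (hdne : d ≠ 0) :
    ∃ x', A.mulVec x' = b ∧ 0 ≤ x' ∧ c ⬝ᵥ x' ≤ c ⬝ᵥ x ∧
      (Finset.univ.filter fun j => 0 < x' j).card <
        (Finset.univ.filter fun j => 0 < x j).card := by
  classical
  by_cases hneg : ∃ j, d j < 0
  · exact lp_step m n A b c x d hx hx0 hd hcd hsupp hneg
  · push_neg at hneg
    have hpos : ∃ j, 0 < d j := by
      by_contra h
      push_neg at h
      apply hdne
      funext j
      exact le_antisymm (h j) (hneg j)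
    rcases lt_or_eq_of_le hcd with hlt | heq
    · -- contradiction with boundedness
      exfalso
      set t : ℝ := (lam - 1 - c ⬝ᵥ x) / (c ⬝ᵥ d) with htdef
      have hlam : lam ≤ c ⬝ᵥ x := hbdd x hx hx0
      have hne : c ⬝ᵥ d ≠ 0 := ne_of_lt hlt
      have hmul : t * (c ⬝ᵥ d) = lam - 1 - c ⬝ᵥ x := div_mul_cancel₀ _ hne
      have ht0 : 0 ≤ t := by nlinarith
      have hfeas' : A.mulVec (x + t • d) = b := by
        rw [Matrix.mulVec_add, Matrix.mulVec_smul, hd, hx]; simp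
      have hpos' : 0 ≤ x + t • d := by
        intro j
        have h1 : 0 ≤ x j := hx0 j
        have h2 : 0 ≤ d j := hneg j
        simp only [Pi.add_apply, Pi.smul_apply, smul_eq_mul, Pi.zero_apply]
        nlinarith [mul_nonneg ht0 h2]
      have := hbdd _ hfeas' hpos'
      rw [dotProduct_add, dotProduct_smul, smul_eq_mul, hmul] at this
      linarith
    · -- c⬝d = 0, use -d
      have h1 : A.mulVec (-d) = 0 := by rw [Matrix.mulVec_neg, hd]; simp
      have h2 : c ⬝ᵥ (-d) ≤ 0 := by simp [dotProduct_neg, heq]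
      have h3 : ∀ j, (-d) j ≠ 0 → 0 < x j := by
        intro j hj
        exact hsupp j (by simpa using hj)
      obtain ⟨j, hj⟩ := hpos
      exact lp_step m n A b c x (-d) hx hx0 h1 h2 h3 ⟨j, by simpa using hj⟩

theorem basic_feasible_improvement (m n : ℕ) (A : Matrix (Fin m) (Fin n) ℝ)
    (b : Fin m → ℝ) (c : Fin n → ℝ) (lam : ℝ)
    (hfeas : ∃ x : Fin n → ℝ, A.mulVec x = b ∧ 0 ≤ x)
    (hbdd : ∀ x : Fin n → ℝ, A.mulVec x = b → 0 ≤ x → lam ≤ c ⬝ᵥ x) :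
    ∀ x : Fin n → ℝ, A.mulVec x = b → 0 ≤ x →
      ∃ xs : Fin n → ℝ, A.mulVec xs = b ∧ 0 ≤ xs ∧
        LinearIndependent ℝ (fun j : {j : Fin n // 0 < xs j} => A.transpose j.1) ∧
        c ⬝ᵥ xs ≤ c ⬝ᵥ x := by
  classical
  suffices h : ∀ k : ℕ, ∀ x : Fin n → ℝ, A.mulVec x = b → 0 ≤ x →
      (Finset.univ.filter fun j => 0 < x j).card ≤ k →
      ∃ xs : Fin n → ℝ, A.mulVec xs = b ∧ 0 ≤ xs ∧
        LinearIndependent ℝ (fun j : {j : Fin n // 0 < xs j} => A.transpose j.1) ∧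
        c ⬝ᵥ xs ≤ c ⬝ᵥ x by
    intro x hx hx0
    exact h _ x hx hx0 le_rfl
  intro k
  induction k with
  | zero =>
    intro x hx hx0 hcard
    have hempty : ∀ j, ¬ (0 < x j) := by
      intro j hj
      have : j ∈ Finset.univ.filter (fun j => 0 < x j) := by simp [hj]
      have := Finset.card_pos.mpr ⟨j, this⟩
      omega
    haveI : IsEmpty {j : Fin n // 0 < x j} := ⟨fun j => hempty j.1 j.2⟩
    exact ⟨x, hx, hx0, linearIndependent_empty_type, le_rfl⟩
  | succ k ih =>
    intro x hx hx0 hcard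
    by_cases hLI : LinearIndependent ℝ (fun j : {j : Fin n // 0 < x j} => A.transpose j.1)
    · exact ⟨x, hx, hx0, hLI, le_rfl⟩
    · obtain ⟨g, hgsum, i, hgi⟩ := Fintype.not_linearIndependent_iff.mp hLI
      set d : Fin n → ℝ := fun j => if h : 0 < x j then g ⟨j, h⟩ else 0 with hddef
      have hsupp : ∀ j, d j ≠ 0 → 0 < x j := by
        intro j hj
        by_contra h
        apply hj
        simp [hddef, h]
      have hdne : d ≠ 0 := by
        intro h
        apply hgi
        have := congrFun h i.1
        simpa [hddef, i.2] using this
      have hd0 : A.mulVec d = 0 := by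
        funext r
        have hcong := congrFun hgsum r
        simp only [Finset.sum_apply, Pi.smul_apply, smul_eq_mul, Pi.zero_apply,
          Matrix.transpose_apply] at hcong
        show (∑ j, A r j * d j) = 0
        have hstep : (∑ j, A r j * d j)
            = ∑ j ∈ Finset.univ.filter (fun j => 0 < x j), A r j * d j := by
          symm
          apply Finset.sum_subset (Finset.filter_subset _ _)
          intro j _ hj
          simp only [Finset.mem_filter, Finset.mem_univ, true_and] at hj
          simp [hddef, hj]
        have hiff : ∀ j, j ∈ Finset.univ.filter (fun j => 0 < x j) ↔ 0 < x j := by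
          intro j; simp
        have h2 := Finset.sum_subtype (p := fun j => 0 < x j) (F := inferInstance)
          (Finset.univ.filter (fun j => 0 < x j)) hiff (fun j => A r j * d j)
        have h3 : ∑ a : {j // 0 < x j}, A r a.1 * d a.1
            = ∑ a : {j // 0 < x j}, g a * A r a.1 :=
          Finset.sum_congr rfl (fun j _ => by simp [hddef, j.2, mul_comm])
        rw [hstep, h2, h3, hcong]
      -- get a direction with c⬝e ≤ 0
      obtain ⟨e, he0, hce, hesupp, hene⟩ :
          ∃ e : Fin n → ℝ, A.mulVec e = 0 ∧ c ⬝ᵥ e ≤ 0 ∧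
            (∀ j, e j ≠ 0 → 0 < x j) ∧ e ≠ 0 := by
        rcases le_total (c ⬝ᵥ d) 0 with h | h
        · exact ⟨d, hd0, h, hsupp, hdne⟩
        · refine ⟨-d, by rw [Matrix.mulVec_neg, hd0]; simp,
            by rw [dotProduct_neg]; linarith, ?_, ?_⟩
          · intro j hj; exact hsupp j (by simpa using hj)
          · simpa [neg_eq_zero] using hdne
      obtain ⟨x', hx'1, hx'2, hx'3, hx'4⟩ :=
        lp_step2 m n A b c lam hbdd x e hx hx0 he0 hce hesupp hene
      obtain ⟨xs, h1, h2, h3, h4⟩ := ih x' hx'1 hx'2 (by omega)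
      exact ⟨xs, h1, h2, h3, le_trans h4 hx'3⟩
end

section
/- Let A be an m×n real matrix with rows a_1,…,a_m and b ∈ ℝ^m, and suppose the system a_i x ≤ b_i (i = 1,…,m) is minimally infeasible. Then for every i ∈ {1,…,m} there exists x^(i) ∈ ℝ^n with a_i x^(i) > b_i and a_k x^(i) = b_k for all k ≠ i. -/
/-!
By Farkas' lemma the infeasible system has a certificate `l ≥ 0` with `∑ l k • a k = 0` and
`∑ l k * b k < 0`. Minimality makes every `l k` positive, since a certificate vanishing at `j`
also refutes the system without its `j`-th inequality. Now raise `b i` by the `δ > 0` for which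
`∑ l k * b' k = 0`. The relaxed system `a k x ≤ b' k` is feasible: a certificate `ν` for it,
minus the largest multiple `t • l` keeping it nonnegative, would certify the infeasibility of the
original system and vanish at some `j`. For a solution `x`, the slacks `b' k - a k x` are
nonnegative with `l`-weighted sum `∑ l k * b' k = 0`, so they all vanish: `a k x = b k` for
`k ≠ i` and `a i x = b i + δ > b i`.

Farkas' lemma itself is proved algebraically, by homogenizing and then following Bartl's
induction on the number of inequalities.
-/

open Finset Matrix

lemma Finset.sum_insert_update_smul {R M ι : Type*} [Semiring R] [AddCommMonoid M] [Module R M]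
    [DecidableEq ι] {s : Finset ι} {j : ι} (hj : j ∉ s) (c : ι → R) (γ : R) (a : ι → M) :
    ∑ i ∈ insert j s, Function.update c j γ i • a i = γ • a j + ∑ i ∈ s, c i • a i := by
  rw [sum_insert hj, Function.update_self]
  congr 1
  exact sum_congr rfl fun i hi => by rw [Function.update_of_ne (ne_of_mem_of_not_mem hi hj)]

variable {𝕜 V ι : Type*} [Field 𝕜] [AddCommGroup V] [Module 𝕜 V]
  {a : ι → Module.Dual 𝕜 V} {b : ι → 𝕜}

lemma sum_mul_sub_apply_eq [Fintype ι] {y : ι → 𝕜} (hy : ∀ x, ∑ i, y i * a i x = 0) (x : V) :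
    ∑ i, y i * (b i - a i x) = ∑ i, y i * b i := by
  simp [mul_sub, sum_sub_distrib, hy x]

lemma sum_mul_add_single [Fintype ι] [DecidableEq ι] (y : ι → 𝕜) (i : ι) (δ : 𝕜) :
    ∑ k, y k * (b + Pi.single i δ : ι → 𝕜) k = ∑ k, y k * b k + y i * δ := by
  simp [mul_add, sum_add_distrib, Pi.single_apply]

variable [LinearOrder 𝕜] [IsStrictOrderedRing 𝕜]

lemma Module.Dual.eq_zero_of_forall_nonneg {f : Dual 𝕜 V} (h : ∀ x, 0 ≤ f x) : f = 0 :=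
  LinearMap.ext fun x => le_antisymm (by simpa using h (-x)) (h x)

/-- Farkas' lemma, homogeneous form. -/
theorem Module.Dual.exists_nonneg_sum_smul_eq_of_forall_nonneg [DecidableEq ι] (s : Finset ι)
    (a : ι → Dual 𝕜 V) (f : Dual 𝕜 V) (h : ∀ x, (∀ i ∈ s, 0 ≤ a i x) → 0 ≤ f x) :
    ∃ c : ι → 𝕜, (∀ i, 0 ≤ c i) ∧ ∑ i ∈ s, c i • a i = f := by
  induction s using Finset.induction_on generalizing a f with
  | empty =>
    refine ⟨0, fun _ => le_rfl, ?_⟩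
    simpa using (eq_zero_of_forall_nonneg fun x => h x (by simp)).symm
  | insert j s hj ih =>
    by_cases hs : ∀ x, (∀ i ∈ s, 0 ≤ a i x) → 0 ≤ f x
    · obtain ⟨c, hc, rfl⟩ := ih a f hs
      refine ⟨Function.update c j 0, fun i => ?_, by
        rw [sum_insert_update_smul hj, zero_smul, zero_add]⟩
      rcases eq_or_ne i j with rfl | hi
      · simp
      · simpa [hi] using hc i
    push Not at hs
    obtain ⟨x₀, hx₀, hfx₀⟩ := hs
    have hjx₀ : a j x₀ < 0 := by
      by_contra! hj₀
      exact hfx₀.not_ge (h x₀ (by simpa [hj₀] using hx₀))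
    -- `P` projects along `a j` onto the functionals vanishing at `x₀`
    set P : Dual 𝕜 V →ₗ[𝕜] Dual 𝕜 V :=
      LinearMap.id - (Dual.eval 𝕜 V x₀).smulRight ((a j x₀)⁻¹ • a j) with hP
    have hPx : ∀ g x, P g x = g (x - (a j x * (a j x₀)⁻¹) • x₀) := by
      intro g x
      simp only [hP, LinearMap.sub_apply, LinearMap.id_coe, id_eq, LinearMap.coe_smulRight,
        eval_apply, LinearMap.smul_apply, smul_eq_mul, map_sub, map_smul, sub_right_inj]
      ring
    obtain ⟨c, hc, hcP⟩ := ih (fun i => P (a i)) (P f) fun x hx => by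
      rw [hPx]
      refine h _ (forall_mem_insert _ _ _ |>.2 ⟨?_, fun i hi => by rw [← hPx]; exact hx i hi⟩)
      simp [hjx₀.ne]
    set g := f - ∑ i ∈ s, c i • a i
    have hg : g = (g x₀ * (a j x₀)⁻¹) • a j := by
      have : P g = 0 := by simp only [g, map_sub, map_sum, map_smul, hcP, sub_self]
      rw [hP] at this
      simpa [sub_eq_zero, smul_smul] using this
    have hgx₀ : g x₀ < 0 := by
      simp only [g, LinearMap.sub_apply, LinearMap.sum_apply, LinearMap.smul_apply, smul_eq_mul]
      linarith [sum_nonneg fun i hi => mul_nonneg (hc i) (hx₀ i hi)]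
    refine ⟨Function.update c j (g x₀ * (a j x₀)⁻¹), fun i => ?_, ?_⟩
    · rcases eq_or_ne i j with rfl | hi
      · simpa using mul_nonneg_of_nonpos_of_nonpos hgx₀.le (inv_nonpos.2 hjx₀.le)
      · simpa [hi] using hc i
    · rw [sum_insert_update_smul hj, ← hg, sub_add_cancel]

variable [Fintype ι]

structure IsInfeasibilityCertificate (a : ι → Module.Dual 𝕜 V) (b y : ι → 𝕜) : Prop where
  nonneg : ∀ i, 0 ≤ y i
  sum_mul_apply_eq_zero : ∀ x, ∑ i, y i * a i x = 0
  sum_mul_neg : ∑ i, y i * b i < 0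

theorem exists_isInfeasibilityCertificate (h : ¬∃ x, ∀ i, a i x ≤ b i) :
    ∃ y, IsInfeasibilityCertificate a b y := by
  classical
  -- homogenize: `a i x ≤ b i * t` for all `i` forces `t ≤ 0`
  obtain ⟨y, hy, hya⟩ := Module.Dual.exists_nonneg_sum_smul_eq_of_forall_nonneg univ
    (fun i => b i • LinearMap.snd 𝕜 V 𝕜 - a i ∘ₗ LinearMap.fst 𝕜 V 𝕜) (-LinearMap.snd 𝕜 V 𝕜)
    fun ⟨x, t⟩ hxt => by
      by_contra! ht
      simp only [LinearMap.neg_apply, LinearMap.snd_apply, neg_lt_zero] at ht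
      refine h ⟨t⁻¹ • x, fun i => ?_⟩
      have hi := hxt i (mem_univ i)
      simp only [LinearMap.sub_apply, LinearMap.smul_apply, LinearMap.snd_apply, smul_eq_mul,
        LinearMap.coe_comp, Function.comp_apply, LinearMap.fst_apply, sub_nonneg] at hi
      rw [map_smul, smul_eq_mul, inv_mul_le_iff₀ ht]
      linarith
  refine ⟨y, hy, fun x => by simpa using LinearMap.congr_fun hya (x, 0), ?_⟩
  have h₁ := LinearMap.congr_fun hya (0, 1)
  simp only [LinearMap.coe_sum, LinearMap.coe_smul, Finset.sum_apply, Pi.smul_apply,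
    LinearMap.sub_apply, LinearMap.smul_apply, LinearMap.snd_apply, smul_eq_mul, mul_one,
    LinearMap.coe_comp, LinearMap.coe_fst, Function.comp_apply, map_zero, sub_zero,
    LinearMap.neg_apply] at h₁
  linarith

namespace IsInfeasibilityCertificate

variable {y : ι → 𝕜}

lemma not_exists_of_eq_zero (hy : IsInfeasibilityCertificate a b y) {j : ι} (hj : y j = 0) :
    ¬∃ x, ∀ k ≠ j, a k x ≤ b k := by
  rintro ⟨x, hx⟩
  have : 0 ≤ ∑ k, y k * (b k - a k x) := sum_nonneg fun k _ => by
    rcases eq_or_ne k j with rfl | hk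
    · simp [hj]
    · exact mul_nonneg (hy.nonneg k) (sub_nonneg.2 (hx k hk))
  rw [sum_mul_sub_apply_eq hy.sum_mul_apply_eq_zero] at this
  exact this.not_gt hy.sum_mul_neg

lemma pos (hy : IsInfeasibilityCertificate a b y) (hmin : ∀ j, ∃ x, ∀ k ≠ j, a k x ≤ b k)
    (k : ι) : 0 < y k :=
  (hy.nonneg k).lt_of_ne' fun h => hy.not_exists_of_eq_zero h (hmin k)

end IsInfeasibilityCertificate

lemma exists_mul_le_and_mul_eq [Nonempty ι] {l : ι → 𝕜} (hl : ∀ k, 0 < l k) (ν : ι → 𝕜) :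
    ∃ t, (∀ k, t * l k ≤ ν k) ∧ ∃ j, t * l j = ν j := by
  obtain ⟨j, hj⟩ := Finite.exists_min fun k => ν k / l k
  exact ⟨ν j / l j, fun k => (le_div_iff₀ (hl k)).1 (hj k), j, div_mul_cancel₀ _ (hl j).ne'⟩

lemma exists_le_add_single_of_minimal [DecidableEq ι] {l : ι → 𝕜}
    (hl : IsInfeasibilityCertificate a b l) (hmin : ∀ j, ∃ x, ∀ k ≠ j, a k x ≤ b k)
    {i : ι} {δ : 𝕜} (hδ : ∑ k, l k * (b + Pi.single i δ : ι → 𝕜) k = 0) :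
    ∃ x, ∀ k, a k x ≤ (b + Pi.single i δ : ι → 𝕜) k := by
  by_contra h
  obtain ⟨ν, hν⟩ := exists_isInfeasibilityCertificate h
  have : Nonempty ι := ⟨i⟩
  obtain ⟨t, ht, j, hj⟩ := exists_mul_le_and_mul_eq (hl.pos hmin) ν
  have hν' := hν.sum_mul_neg
  rw [sum_mul_add_single] at hν' hδ
  have hδ₀ : 0 ≤ δ := by
    have := hl.sum_mul_neg
    exact (pos_of_mul_pos_right (by linarith) (hl.nonneg i)).le
  have hcert : IsInfeasibilityCertificate a b fun k => ν k - t * l k := by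
    refine ⟨fun k => sub_nonneg.2 (ht k), fun x => ?_, ?_⟩
    · simp only [sub_mul, sum_sub_distrib, mul_assoc, ← mul_sum, hν.sum_mul_apply_eq_zero x,
        hl.sum_mul_apply_eq_zero x, mul_zero, sub_zero]
    · have : t * l i * δ ≤ ν i * δ := mul_le_mul_of_nonneg_right (ht i) hδ₀
      have hlb : ∑ k, l k * b k = -(l i * δ) := by linarith
      simp only [sub_mul, sum_sub_distrib, mul_assoc, ← mul_sum, hlb]
      linarith
  exact hcert.not_exists_of_eq_zero (j := j) (by simp [hj]) (hmin j)

theorem exists_lt_and_eq_of_minimally_infeasible (hinf : ¬∃ x, ∀ k, a k x ≤ b k)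
    (hmin : ∀ j, ∃ x, ∀ k ≠ j, a k x ≤ b k) (i : ι) :
    ∃ x, b i < a i x ∧ ∀ k ≠ i, a k x = b k := by
  classical
  obtain ⟨l, hl⟩ := exists_isInfeasibilityCertificate hinf
  have hlpos := hl.pos hmin
  set b' : ι → 𝕜 := b + Pi.single i (-(∑ k, l k * b k) / l i)
  have hb' : ∑ k, l k * b' k = 0 := by
    rw [sum_mul_add_single, mul_div_cancel₀ _ (hlpos i).ne', add_neg_cancel]
  obtain ⟨x, hx⟩ := exists_le_add_single_of_minimal hl hmin hb'
  have htight : ∀ k, a k x = b' k := by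
    have hsum := sum_mul_sub_apply_eq (b := b') hl.sum_mul_apply_eq_zero x
    rw [hb', sum_eq_zero_iff_of_nonneg fun k _ => mul_nonneg (hlpos k).le (sub_nonneg.2 (hx k))]
      at hsum
    exact fun k => (sub_eq_zero.1 ((mul_eq_zero.1 (hsum k (mem_univ k))).resolve_left
      (hlpos k).ne')).symm
  have heq : ∀ k ≠ i, a k x = b k := fun k hk => by simp [htight, b', hk]
  refine ⟨x, lt_of_not_ge fun hxi => hinf ⟨x, fun k => ?_⟩, heq⟩
  rcases eq_or_ne k i with rfl | hk
  · exact hxi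
  · exact (heq k hk).le

theorem minimally_infeasible_reverse (m n : ℕ) (A : Matrix (Fin m) (Fin n) ℝ)
    (b : Fin m → ℝ)
    (hinf : ¬ ∃ x : Fin n → ℝ, ∀ i, A i ⬝ᵥ x ≤ b i)
    (hmin : ∀ i : Fin m, ∃ x : Fin n → ℝ, ∀ k, k ≠ i → A k ⬝ᵥ x ≤ b k) :
    ∀ i : Fin m, ∃ x : Fin n → ℝ, A i ⬝ᵥ x > b i ∧ ∀ k, k ≠ i → A k ⬝ᵥ x = b k :=
  exists_lt_and_eq_of_minimally_infeasible (a := fun k => LinearMap.proj k ∘ₗ A.mulVecLin)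
    hinf hmin
end
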